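/- arXiv:1803.03929 — 6 statements merged into one kernel-verified Lean document; each statement's English description precedes it below -/
import Mathlib

section
/- Let I ⊆ [m] be a circuit with circuit vector c_I, and let [A|I] be the submatrix of A consisting of the rows indexed by I. Then the column space Col[A|I] = {[A|I]x : x ∈ F^n} ⊆ F^I equals the subspace {u ∈ F^I : Σ_{i∈I} (c_I)_i u_i = 0}; in particular both subspaces have dimension |I| − 1, and rank[A|I] = |I| − 1. -/
open Matrix

variable {F : Type*} [Field F] {m n : ℕ}

/-- The subsystem `[A|J] x = [g|J]` is consistent. -/
def Consistent (A : Matrix (Fin m) (Fin n) F) (J : Finset (Fin m)) (g : Fin m → F) : Prop :=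
  ∃ x : Fin n → F, ∀ j ∈ J, A j ⬝ᵥ x = g j

/-- `I` is a circuit of the matroid represented by the rows of `A`: the rows indexed by `I`
are linearly dependent, but the rows indexed by any proper subset are linearly independent. -/
def IsCircuit (A : Matrix (Fin m) (Fin n) F) (I : Finset (Fin m)) : Prop :=
  ¬ LinearIndependent F (fun i : ↥I => A (i : Fin m)) ∧
    ∀ J : Finset (Fin m), J ⊂ I → LinearIndependent F (fun j : ↥J => A (j : Fin m))

/-- `c` is a circuit vector of the circuit `I`: `c · A = 0`, the entries of `c` indexed by `I`
are nonzero, and all other entries vanish. -/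
def IsCircuitVector (A : Matrix (Fin m) (Fin n) F) (I : Finset (Fin m)) (c : Fin m → F) : Prop :=
  Matrix.vecMul c A = 0 ∧ (∀ i ∈ I, c i ≠ 0) ∧ (∀ i ∉ I, c i = 0)
/-- For a circuit `I` with circuit vector `c`, the column space of the
submatrix `[A|I]` equals the hyperplane `{u : F^I | ∑ i ∈ I, c i * u i = 0}`; both have
dimension `|I| - 1`, and `rank [A|I] = |I| - 1`. -/
theorem colSpace_submatrix_eq_ker
    (hm : 0 < m) (hn : 0 < n) (A : Matrix (Fin m) (Fin n) F)
    (I : Finset (Fin m)) (hI : IsCircuit A I)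
    (c : Fin m → F) (hc : IsCircuitVector A I c) :
    LinearMap.range (A.submatrix ((↑) : ↥I → Fin m) id).mulVecLin
        = LinearMap.ker (∑ i : ↥I, c (i : Fin m) • (LinearMap.proj i : (↥I → F) →ₗ[F] F)) ∧
      Module.finrank F
          ↥(LinearMap.range (A.submatrix ((↑) : ↥I → Fin m) id).mulVecLin) = I.card - 1 ∧
      Module.finrank F
          ↥(LinearMap.ker
            (∑ i : ↥I, c (i : Fin m) • (LinearMap.proj i : (↥I → F) →ₗ[F] F))) = I.card - 1 ∧
      (A.submatrix ((↑) : ↥I → Fin m) id).rank = I.card - 1 := by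
  classical
  obtain ⟨hdep, hind⟩ := hI
  obtain ⟨hcA, hcI, hcI'⟩ := hc
  set B := A.submatrix ((↑) : ↥I → Fin m) id with hB
  set φ : (↥I → F) →ₗ[F] F :=
    ∑ i : ↥I, c (i : Fin m) • (LinearMap.proj i : (↥I → F) →ₗ[F] F) with hφ
  have hφapp : ∀ u : ↥I → F, φ u = ∑ i : ↥I, c (i : Fin m) * u i := by
    intro u
    simp [hφ, LinearMap.sum_apply, smul_eq_mul]
  have hIne : I.Nonempty := by
    rw [Finset.nonempty_iff_ne_empty]
    rintro rfl
    exact hdep (linearIndependent_empty_type)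
  obtain ⟨i0, hi0⟩ := hIne
  -- range ⊆ ker
  have hsub : LinearMap.range B.mulVecLin ≤ LinearMap.ker φ := by
    rintro _ ⟨x, rfl⟩
    rw [LinearMap.mem_ker, hφapp]
    have h1 : ∑ i : ↥I, c (i : Fin m) * (B.mulVecLin x) i
        = ∑ i ∈ I, c i * (A i ⬝ᵥ x) := by
      rw [← Finset.sum_attach I (fun i => c i * (A i ⬝ᵥ x))]
      rfl
    rw [h1, Finset.sum_subset (Finset.subset_univ I)
      (fun i _ hi => by rw [hcI' i hi, zero_mul])]
    have h2 : ∑ i : Fin m, c i * (A i ⬝ᵥ x) = c ⬝ᵥ A.mulVec x := rfl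
    rw [h2, Matrix.dotProduct_mulVec, hcA, zero_dotProduct]
  -- ker has finrank |I| - 1
  have hcard : Fintype.card ↥I = I.card := Fintype.card_coe I
  have hφne : φ ≠ 0 := by
    intro h
    have := hφapp (Pi.single ⟨i0, hi0⟩ 1)
    rw [h] at this
    simp only [LinearMap.zero_apply] at this
    rw [Finset.sum_eq_single (⟨i0, hi0⟩ : ↥I)] at this
    · simp at this
      exact hcI i0 hi0 this.symm
    · intro b _ hb
      rw [Pi.single_apply, if_neg hb, mul_zero]
    · intro h; exact absurd (Finset.mem_univ _) h
  have hrtop : LinearMap.range φ = ⊤ := by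
    obtain ⟨u, hu⟩ : ∃ u, φ u ≠ 0 := by
      by_contra h
      push_neg at h
      exact hφne (LinearMap.ext fun u => h u)
    rw [LinearMap.range_eq_top]
    intro a
    exact ⟨(a * (φ u)⁻¹) • u, by rw [LinearMap.map_smul, smul_eq_mul, mul_assoc, inv_mul_cancel₀ hu, mul_one]⟩
  have hker : Module.finrank F ↥(LinearMap.ker φ) = I.card - 1 := by
    have := LinearMap.finrank_range_add_finrank_ker φ
    rw [hrtop, finrank_top, Module.finrank_self, Module.finrank_fintype_fun_eq_card, hcard]
      at this
    omega
  -- lower bound on rank via the rows indexed by I.erase i0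
  set J := I.erase i0 with hJ
  have hJI : J ⊂ I := Finset.erase_ssubset hi0
  have hli : LinearIndependent F (fun j : ↥J => A (j : Fin m)) := hind J hJI
  have hMrank : (A.submatrix ((↑) : ↥J → Fin m) id).rank = I.card - 1 := by
    have : LinearIndependent F (A.submatrix ((↑) : ↥J → Fin m) id) := by
      convert hli using 1
      exact Iff.rfl
    rw [show (A.submatrix ((↑) : ↥J → Fin m) id).rank = Fintype.card ↥J from this.rank_matrix, Fintype.card_coe, hJ, Finset.card_erase_of_mem hi0]
  have hlow : I.card - 1 ≤ B.rank := by
    rw [← hMrank, Matrix.rank_eq_finrank_span_row, Matrix.rank_eq_finrank_span_row]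
    apply Submodule.finrank_mono
    apply Submodule.span_mono
    rintro _ ⟨j, rfl⟩
    exact ⟨⟨(j : Fin m), Finset.mem_of_mem_erase j.2⟩, rfl⟩
  have hhigh : B.rank ≤ I.card - 1 := by
    rw [Matrix.rank, ← hker]
    exact Submodule.finrank_mono hsub
  have hrank : B.rank = I.card - 1 := le_antisymm hhigh hlow
  have hrange : Module.finrank F ↥(LinearMap.range B.mulVecLin) = I.card - 1 := hrank
  have heq : LinearMap.range B.mulVecLin = LinearMap.ker φ :=
    Submodule.eq_of_le_of_finrank_eq hsub (by rw [hrange, hker])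
  exact ⟨heq, hrange, hker, hrank⟩
end

section
/- (Lemma 2.2) For every g ∈ F^m, the linear system Ax = g is consistent if and only if for every subset I ⊆ [m] whose indexed rows form a minimal linearly dependent family (i.e., for every circuit I), the subsystem [A|I]x = [g|I] is consistent. -/
open Matrix

variable {F : Type*} [Field F] {m n : ℕ}

open Classical in
/-- Fredholm-type alternative: if `g` is not in the range of `x ↦ A x`, there is a row
vector `c` with `c ᵥ* A = 0` but `c ⬝ᵥ g ≠ 0`. -/
lemma exists_separating_vector (A : Matrix (Fin m) (Fin n) F) (g : Fin m → F)
    (hg : ¬ ∃ x : Fin n → F, A.mulVec x = g) :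
    ∃ c : Fin m → F, Matrix.vecMul c A = 0 ∧ c ⬝ᵥ g ≠ 0 := by
  have hg' : g ∉ LinearMap.range A.mulVecLin := by
    simpa [LinearMap.mem_range, Matrix.mulVecLin_apply] using hg
  obtain ⟨f, hfg, hfmap⟩ :=
    (LinearMap.range A.mulVecLin).exists_dual_map_eq_bot_of_notMem hg' inferInstance
  have hker : ∀ x : Fin n → F, f (A.mulVec x) = 0 := by
    intro x
    have : f (A.mulVec x) ∈ (LinearMap.range A.mulVecLin).map f :=
      Submodule.mem_map_of_mem ⟨x, rfl⟩
    rw [hfmap, Submodule.mem_bot] at this; exact this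
  set c : Fin m → F := fun i => f (fun j => if i = j then 1 else 0) with hc
  have hf_eq : ∀ v : Fin m → F, f v = c ⬝ᵥ v := by
    intro v
    rw [LinearMap.pi_apply_eq_sum_univ f v]
    simp [dotProduct, mul_comm]
    rfl
  refine ⟨c, ?_, ?_⟩
  · funext j
    have := hker (Pi.single j 1)
    rw [hf_eq] at this
    have hmv : A.mulVec (Pi.single j 1) = fun i => A i j := by
      funext i
      simp [Matrix.mulVec, dotProduct, Pi.single_apply, mul_comm]
    rw [hmv] at this
    simpa [Matrix.vecMul, dotProduct] using this
  · rw [← hf_eq]; exact hfg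

/-- **Lemma 2.2.** The system `A x = g` is consistent iff for every circuit
`I` (i.e. every index set of a minimal linearly dependent family of rows) the subsystem
`[A|I] x = [g|I]` is consistent. -/
theorem consistent_iff_consistent_on_circuits
    (hm : 0 < m) (hn : 0 < n) (A : Matrix (Fin m) (Fin n) F) (g : Fin m → F) :
    (∃ x : Fin n → F, A.mulVec x = g) ↔
      ∀ I : Finset (Fin m), IsCircuit A I → Consistent A I g := by
  classical
  constructor
  · rintro ⟨x, hx⟩ I _
    exact ⟨x, fun j _ => by rw [← hx]; rfl⟩
  · intro h
    by_contra hg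
    obtain ⟨c₀, hc₀A, hc₀g⟩ := exists_separating_vector A g hg
    -- pick such a vector with minimal support
    set P : ℕ → Prop := fun k =>
      ∃ c : Fin m → F, Matrix.vecMul c A = 0 ∧ c ⬝ᵥ g ≠ 0 ∧
        (Finset.univ.filter fun i => c i ≠ 0).card = k
    have hP : ∃ k, P k := ⟨_, c₀, hc₀A, hc₀g, rfl⟩
    obtain ⟨c, hcA, hcg, hccard⟩ := Nat.find_spec hP
    set I : Finset (Fin m) := Finset.univ.filter fun i => c i ≠ 0 with hI
    have hmemI : ∀ i, i ∈ I ↔ c i ≠ 0 := fun i => by simp [hI]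
    -- the rows of I are linearly dependent, via c
    have hdep : ¬ LinearIndependent F (fun i : ↥I => A (i : Fin m)) := by
      rw [Fintype.linearIndependent_iff]
      push_neg
      refine ⟨fun i => c i, ?_, ?_⟩
      · funext j
        have : ∑ i ∈ I, c i * A i j = ∑ i, c i * A i j := by
          refine Finset.sum_subset (Finset.subset_univ _) ?_
          intro i _ hi
          have : c i = 0 := by by_contra hne; exact hi ((hmemI i).mpr hne)
          simp [this]
        calc (∑ i : ↥I, c i • A (i : Fin m)) j
            = ∑ i ∈ I, c i * A i j := by
              rw [Finset.sum_apply]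
              rw [← Finset.sum_attach I (fun i => c i * A i j)]
              simp [Pi.smul_apply, smul_eq_mul]
          _ = ∑ i, c i * A i j := this
          _ = 0 := by
              have := congrFun hcA j
              simpa [Matrix.vecMul, dotProduct] using this
      · have : I.Nonempty := by
          by_contra hempty
          rw [Finset.not_nonempty_iff_eq_empty] at hempty
          have : c = 0 := by
            funext i
            by_contra hne
            have := (hmemI i).mpr hne
            simp [hempty] at this
          rw [this] at hcg
          simp [dotProduct] at hcg
        obtain ⟨i, hi⟩ := this
        exact ⟨⟨i, hi⟩, (hmemI i).mp hi⟩
    -- proper subsets of I are linearly independent, by minimality of support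
    have hindep : ∀ J : Finset (Fin m), J ⊂ I →
        LinearIndependent F (fun j : ↥J => A (j : Fin m)) := by
      intro J hJ
      by_contra hnli
      rw [Fintype.linearIndependent_iff] at hnli
      push_neg at hnli
      obtain ⟨d₀, hd₀sum, j₀, hj₀⟩ := hnli
      set d : Fin m → F := fun i => if h : i ∈ J then d₀ ⟨i, h⟩ else 0 with hd
      have hdJ : ∀ i, i ∉ J → d i = 0 := fun i hi => by simp [hd, hi]
      have hdA : Matrix.vecMul d A = 0 := by
        funext j
        have : ∑ i, d i * A i j = ∑ i ∈ J, d i * A i j := by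
          refine (Finset.sum_subset (Finset.subset_univ _) ?_).symm
          intro i _ hi; simp [hdJ i hi]
        have h2 : ∑ i ∈ J, d i * A i j = (∑ i : ↥J, d₀ i • A (i : Fin m)) j := by
          rw [Finset.sum_apply, ← Finset.sum_attach J (fun i => d i * A i j)]
          refine Finset.sum_congr rfl fun i _ => ?_
          simp [hd, i.2, Pi.smul_apply, smul_eq_mul]
        simp only [Matrix.vecMul, dotProduct, Pi.zero_apply]
        rw [this, h2, hd₀sum]
        rfl
      have hsuppd : (Finset.univ.filter fun i => d i ≠ 0) ⊆ J := by
        intro i hi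
        simp only [Finset.mem_filter] at hi
        by_contra hiJ
        exact hi.2 (hdJ i hiJ)
      have hcardJ : J.card < I.card := Finset.card_lt_card hJ
      by_cases hdg : d ⬝ᵥ g = 0
      · -- eliminate the coordinate j₀ from c
        set k₀ : Fin m := (j₀ : Fin m) with hk₀
        have hk₀J : k₀ ∈ J := j₀.2
        have hdk₀ : d k₀ ≠ 0 := by simpa [hd, hk₀J] using hj₀
        set c' : Fin m → F := c - (c k₀ / d k₀) • d with hc'
        have hc'A : Matrix.vecMul c' A = 0 := by
          rw [hc', Matrix.sub_vecMul, Matrix.smul_vecMul, hcA, hdA]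
          simp
        have hc'g : c' ⬝ᵥ g ≠ 0 := by
          rw [hc', sub_dotProduct, smul_dotProduct, hdg]
          simpa using hcg
        have hk₀I : k₀ ∈ I := hJ.1 hk₀J
        have hsupp' : (Finset.univ.filter fun i => c' i ≠ 0) ⊆ I.erase k₀ := by
          intro i hi
          simp only [Finset.mem_filter] at hi
          rw [Finset.mem_erase]
          constructor
          · rintro rfl
            apply hi.2
            simp [hc', Pi.sub_apply, Pi.smul_apply, smul_eq_mul,
              div_mul_cancel₀ _ hdk₀]
          · by_contra hiI
            apply hi.2
            have hc0 : c i = 0 := by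
              by_contra hne; exact hiI ((hmemI i).mpr hne)
            have hd0 : d i = 0 := hdJ i fun hiJ => hiI (hJ.1 hiJ)
            simp [hc', hc0, hd0]
        have hlt : (Finset.univ.filter fun i => c' i ≠ 0).card < I.card := by
          calc (Finset.univ.filter fun i => c' i ≠ 0).card
              ≤ (I.erase k₀).card := Finset.card_le_card hsupp'
            _ < I.card := Finset.card_erase_lt_of_mem hk₀I
        have hlt' : (Finset.univ.filter fun i => c' i ≠ 0).card < Nat.find hP := by
          rw [← hccard]; exact hlt
        exact Nat.find_min hP hlt' ⟨c', hc'A, hc'g, rfl⟩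
      · -- d itself has smaller support and d ⬝ᵥ g ≠ 0
        have hlt : (Finset.univ.filter fun i => d i ≠ 0).card < Nat.find hP := by
          calc (Finset.univ.filter fun i => d i ≠ 0).card
              ≤ J.card := Finset.card_le_card hsuppd
            _ < I.card := hcardJ
            _ = Nat.find hP := hccard
        exact Nat.find_min hP hlt ⟨d, hdA, hdg, rfl⟩
    -- I is a circuit, so the subsystem is consistent; derive a contradiction
    obtain ⟨x, hx⟩ := h I ⟨hdep, hindep⟩
    apply hcg
    have : c ⬝ᵥ g = ∑ i ∈ I, c i * g i := by
      rw [dotProduct]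
      refine (Finset.sum_subset (Finset.subset_univ _) ?_).symm
      intro i _ hi
      have : c i = 0 := by by_contra hne; exact hi ((hmemI i).mpr hne)
      simp [this]
    rw [this]
    have : ∀ i ∈ I, c i * g i = c i * (A i ⬝ᵥ x) := fun i hi => by rw [hx i hi]
    rw [Finset.sum_congr rfl this]
    have : ∑ i ∈ I, c i * (A i ⬝ᵥ x) = ∑ i, c i * (A i ⬝ᵥ x) := by
      refine Finset.sum_subset (Finset.subset_univ _) ?_
      intro i _ hi
      have : c i = 0 := by by_contra hne; exact hi ((hmemI i).mpr hne)
      simp [this]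
    rw [this]
    have : ∑ i, c i * (A i ⬝ᵥ x) = Matrix.vecMul c A ⬝ᵥ x := by
      simp only [Matrix.vecMul, dotProduct, Matrix.mulVec, Finset.sum_mul,
        Finset.mul_sum]
      rw [Finset.sum_comm]
      congr 1; funext j; congr 1; funext i; ring
    rw [this, hcA]
    simp
end

section
/- For every g ∈ F^m, I_g = {J ⊆ [m] : every circuit I ∈ C(M) with I ⊆ J belongs to C_g}; that is, a subsystem [A|J]x = [g|J] is consistent if and only if every circuit contained in J lies in C_g. -/
open Matrix

variable {F : Type*} [Field F] {m n : ℕ}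

/-- `I_g`: the collection of index sets `J` for which `[A|J] x = [g|J]` is consistent. -/
def Iset (A : Matrix (Fin m) (Fin n) F) (g : Fin m → F) : Set (Finset (Fin m)) :=
  {J | Consistent A J g}

/-- `C_g = I_g ∩ C(M)`: the circuits whose subsystem is consistent. -/
def Cset (A : Matrix (Fin m) (Fin n) F) (g : Fin m → F) : Set (Finset (Fin m)) :=
  Iset A g ∩ {I | IsCircuit A I}

lemma indep_subset {A : Matrix (Fin m) (Fin n) F} {I B : Finset (Fin m)}
    (hIB : I ⊆ B) (h : LinearIndependent F (fun i : ↥B => A (i : Fin m))) :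
    LinearIndependent F (fun i : ↥I => A (i : Fin m)) := by
  have hinj : Function.Injective (fun i : ↥I => (⟨i.1, hIB i.2⟩ : ↥B)) := by
    intro a b hab
    simp only [Subtype.mk.injEq] at hab
    exact Subtype.ext hab
  exact LinearIndependent.comp h _ hinj

lemma exists_sol {A : Matrix (Fin m) (Fin n) F} {B : Finset (Fin m)}
    (h : LinearIndependent F (fun i : ↥B => A (i : Fin m))) (g : Fin m → F) :
    ∃ x : Fin n → F, ∀ j ∈ B, A j ⬝ᵥ x = g j := by
  classical
  set M' : Matrix ↥B (Fin n) F := fun j => A (j : Fin m) with hM'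
  have hinj : Function.Injective M'.vecMul := Matrix.vecMul_injective_iff.mpr h
  have hdual : Function.Injective (Matrix.mulVecLin M').dualMap := by
    rw [← LinearMap.ker_eq_bot, LinearMap.ker_eq_bot']
    intro φ hφ
    set c : ↥B → F := fun j => φ (Pi.single j 1) with hc
    have hφv : ∀ v : ↥B → F, φ v = ∑ j, v j * c j := by
      intro v
      have hv : φ v = φ (∑ j, (Pi.single j (v j) : ↥B → F)) := by
        rw [Finset.univ_sum_single]
      rw [hv, map_sum]
      refine Finset.sum_congr rfl fun j _ => ?_
      have h3 : (Pi.single j (v j) : ↥B → F) = v j • (Pi.single j 1 : ↥B → F) := by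
        rw [← Pi.single_smul, smul_eq_mul, mul_one]
      rw [h3, _root_.map_smul, smul_eq_mul]
    have hc0 : c = 0 := by
      apply hinj
      show Matrix.vecMul c M' = Matrix.vecMul 0 M'
      rw [Matrix.zero_vecMul]
      ext i
      have h1 := LinearMap.congr_fun hφ (Pi.single i 1)
      rw [LinearMap.dualMap_apply'] at h1
      simp only [LinearMap.comp_apply, Matrix.mulVecLin_apply, LinearMap.zero_apply] at h1
      have h2 : M' *ᵥ Pi.single i 1 = fun j => M' j i := by
        ext j; simp [Matrix.mulVec, dotProduct, Pi.single_apply]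
      rw [h2, hφv] at h1
      simpa [Matrix.vecMul, dotProduct, mul_comm] using h1
    apply LinearMap.ext
    intro v
    rw [hφv, hc0]
    simp
  have hsurj : Function.Surjective (Matrix.mulVecLin M') :=
    LinearMap.dualMap_injective_iff.mp hdual
  obtain ⟨x, hx⟩ := hsurj (fun j : ↥B => g j)
  refine ⟨x, fun j hj => ?_⟩
  have := congrFun hx ⟨j, hj⟩
  simpa [Matrix.mulVecLin_apply, Matrix.mulVec] using this

/-- `I_g` consists exactly of those `J ⊆ [m]` all of whose contained
circuits lie in `C_g`. -/
theorem Iset_eq_circuits_condition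
    (hm : 0 < m) (hn : 0 < n) (A : Matrix (Fin m) (Fin n) F) (g : Fin m → F) :
    Iset A g =
      {J : Finset (Fin m) | ∀ I : Finset (Fin m), IsCircuit A I → I ⊆ J → I ∈ Cset A g} := by
  classical
  ext J
  simp only [Set.mem_setOf_eq]
  constructor
  · rintro ⟨x, hx⟩ I hI hIJ
    exact ⟨⟨x, fun i hi => hx i (hIJ hi)⟩, hI⟩
  · intro hJ
    -- maximal independent subset B of J
    obtain ⟨B, hBmem, hBmax⟩ := Finset.exists_max_image
      (J.powerset.filter (fun (S : Finset (Fin m)) => LinearIndependent F (fun i : ↥S => A (i : Fin m))))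
      Finset.card
      ⟨∅, by
        simp only [Finset.mem_filter, Finset.mem_powerset]
        exact ⟨Finset.empty_subset J, linearIndependent_empty_type⟩⟩
    rw [Finset.mem_filter, Finset.mem_powerset] at hBmem
    obtain ⟨hBJ, hBind⟩ := hBmem
    obtain ⟨x, hx⟩ := exists_sol hBind g
    refine ⟨x, fun j hj => ?_⟩
    by_cases hjB : j ∈ B
    · exact hx j hjB
    -- insert j B is dependent
    have hdep : ¬ LinearIndependent F (fun i : ↥(insert j B) => A (i : Fin m)) := by
      intro hind
      have hmem : insert j B ∈ J.powerset.filter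
          (fun (S : Finset (Fin m)) => LinearIndependent F (fun i : ↥S => A (i : Fin m))) := by
        rw [Finset.mem_filter, Finset.mem_powerset]
        exact ⟨Finset.insert_subset hj hBJ, hind⟩
      have := hBmax _ hmem
      rw [Finset.card_insert_of_notMem hjB] at this
      omega
    -- minimal dependent subset I of insert j B
    obtain ⟨I, hImem, hImin⟩ := Finset.exists_min_image
      ((insert j B).powerset.filter
        (fun (S : Finset (Fin m)) => ¬ LinearIndependent F (fun i : ↥S => A (i : Fin m))))
      Finset.card
      ⟨insert j B, by
        rw [Finset.mem_filter, Finset.mem_powerset]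
        exact ⟨Finset.Subset.refl _, hdep⟩⟩
    rw [Finset.mem_filter, Finset.mem_powerset] at hImem
    obtain ⟨hIins, hIdep⟩ := hImem
    have hcirc : IsCircuit A I := by
      refine ⟨hIdep, fun J' hJ' => ?_⟩
      by_contra hJ'dep
      have hmem : J' ∈ (insert j B).powerset.filter
          (fun (S : Finset (Fin m)) => ¬ LinearIndependent F (fun i : ↥S => A (i : Fin m))) := by
        rw [Finset.mem_filter, Finset.mem_powerset]
        exact ⟨(hJ'.subset).trans hIins, hJ'dep⟩
      have h1 := hImin _ hmem
      have h2 := Finset.card_lt_card hJ'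
      omega
    have hjI : j ∈ I := by
      by_contra hjI
      have hIB : I ⊆ B := by
        intro i hi
        rcases Finset.mem_insert.mp (hIins hi) with h1 | h1
        · exact absurd (h1 ▸ hi) hjI
        · exact h1
      exact hIdep (indep_subset hIB hBind)
    have hIJ : I ⊆ J := hIins.trans (Finset.insert_subset hj hBJ)
    obtain ⟨⟨y, hy⟩, -⟩ := hJ I hcirc hIJ
    -- dependence coefficients
    obtain ⟨c, hcsum, i₀, hi₀⟩ := Fintype.not_linearIndependent_iff.mp hIdep
    set C : Fin m → F := fun i => if h : i ∈ I then c ⟨i, h⟩ else 0 with hC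
    have hCsum : ∑ i ∈ I, C i • A i = 0 := by
      rw [← Finset.sum_coe_sort I (fun i => C i • A i)]
      rw [← hcsum]
      refine Finset.sum_congr rfl fun i _ => ?_
      simp [hC, i.2]
    have hlin : ∀ (z : Fin n → F) (s : Finset (Fin m)) (f : Fin m → Fin n → F),
        (∑ i ∈ s, f i) ⬝ᵥ z = ∑ i ∈ s, f i ⬝ᵥ z := by
      intro z s f
      induction s using Finset.induction with
      | empty => simp
      | insert _ _ h ih =>
        rw [Finset.sum_insert h, Finset.sum_insert h, add_dotProduct, ih]
    have hdot : ∀ z : Fin n → F, ∑ i ∈ I, C i * (A i ⬝ᵥ z) = 0 := by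
      intro z
      have h0 := congrArg (fun v => v ⬝ᵥ z) hCsum
      simp only [zero_dotProduct] at h0
      rw [hlin z I (fun i => C i • A i)] at h0
      simpa [smul_dotProduct, smul_eq_mul] using h0
    have hCj : C j ≠ 0 := by
      intro hCj0
      have herase : LinearIndependent F (fun i : ↥(I.erase j) => A (i : Fin m)) :=
        hcirc.2 _ (Finset.erase_ssubset hjI)
      have hsum0 : ∑ i : ↥(I.erase j), C (i : Fin m) • A (i : Fin m) = 0 := by
        rw [Finset.sum_coe_sort (I.erase j) (fun i => C i • A i)]
        rw [← Finset.sum_erase_add I _ hjI, hCj0, zero_smul, add_zero] at hCsum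
        exact hCsum
      have hall := Fintype.linearIndependent_iff.mp herase (fun i => C (i : Fin m)) hsum0
      apply hi₀
      have : C (i₀ : Fin m) = c i₀ := by simp [hC, i₀.2]
      rw [← this]
      by_cases hij : (i₀ : Fin m) = j
      · rw [hij]; exact hCj0
      · exact hall ⟨i₀, Finset.mem_erase.mpr ⟨hij, i₀.2⟩⟩
    -- compare the two sums
    have hxsum := hdot x
    have hysum := hdot y
    rw [← Finset.sum_erase_add I _ hjI] at hxsum hysum
    have herB : ∀ i ∈ I.erase j, A i ⬝ᵥ x = g i := by
      intro i hi
      obtain ⟨hij, hiI⟩ := Finset.mem_erase.mp hi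
      rcases Finset.mem_insert.mp (hIins hiI) with h1 | h1
      · exact absurd h1 hij
      · exact hx i h1
    have h5 : ∑ i ∈ I.erase j, C i * (A i ⬝ᵥ x) = ∑ i ∈ I.erase j, C i * (A i ⬝ᵥ y) := by
      refine Finset.sum_congr rfl fun i hi => ?_
      rw [herB i hi, hy i (Finset.mem_erase.mp hi).2]
    rw [h5] at hxsum
    have h6 : C j * (A j ⬝ᵥ x) = C j * (A j ⬝ᵥ y) := by
      have h8 := hxsum.trans hysum.symm
      exact add_left_cancel h8
    have h7 := mul_left_cancel₀ hCj h6
    rw [h7, hy j hjI]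
end

section
/- (Corollary 2.3) For all g, h ∈ F^m: I_g ⊆ I_h if and only if C_g ⊆ C_h; in particular, I_g = I_h if and only if C_g = C_h. -/
open Matrix

variable {F : Type*} [Field F] {m n : ℕ}

/-- Independent subsystems are always consistent. -/
lemma consistent_of_linearIndependent (A : Matrix (Fin m) (Fin n) F) (J : Finset (Fin m))
    (hJ : LinearIndependent F (fun i : ↥J => A (i : Fin m))) (h : Fin m → F) :
    Consistent A J h := by
  classical
  set B : Matrix ↥J (Fin n) F := fun i => A (i : Fin m) with hB
  have hrank : B.rank = Fintype.card ↥J := LinearIndependent.rank_matrix hJ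
  have htop : LinearMap.range B.mulVecLin = ⊤ := by
    apply Submodule.eq_top_of_finrank_eq
    rw [← Matrix.rank, hrank, Module.finrank_pi]
  have hsurj : Function.Surjective B.mulVecLin := LinearMap.range_eq_top.mp htop
  obtain ⟨x, hx⟩ := hsurj (fun i : ↥J => h (i : Fin m))
  refine ⟨x, fun j hj => ?_⟩
  have := congrFun hx ⟨j, hj⟩
  rw [Matrix.mulVecLin_apply] at this
  simpa [Matrix.mulVecLin_apply, Matrix.mulVec, hB] using this

/-- Every dependent finite set of rows contains a circuit. -/
lemma exists_circuit_subset (A : Matrix (Fin m) (Fin n) F) :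
    ∀ J : Finset (Fin m), ¬ LinearIndependent F (fun i : ↥J => A (i : Fin m)) →
      ∃ C ⊆ J, IsCircuit A C := by
  intro J
  induction J using Finset.strongInduction with
  | _ J ih =>
    intro hdep
    by_cases hmin : ∀ T : Finset (Fin m), T ⊂ J →
        LinearIndependent F (fun i : ↥T => A (i : Fin m))
    · exact ⟨J, le_refl J, hdep, hmin⟩
    · push_neg at hmin
      obtain ⟨T, hTJ, hT⟩ := hmin
      obtain ⟨C, hCT, hC⟩ := ih T hTJ hT
      exact ⟨C, hCT.trans hTJ.subset, hC⟩

/-- Every circuit has a circuit vector. -/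
lemma exists_circuitVector (A : Matrix (Fin m) (Fin n) F) (C : Finset (Fin m))
    (hC : IsCircuit A C) : ∃ c : Fin m → F, IsCircuitVector A C c := by
  classical
  obtain ⟨hdep, hindep⟩ := hC
  rw [Fintype.not_linearIndependent_iff] at hdep
  obtain ⟨g, hg0, i0, hi0⟩ := hdep
  set c : Fin m → F := fun i => if h : i ∈ C then g ⟨i, h⟩ else 0 with hc
  have hcC : ∀ i (h : i ∈ C), c i = g ⟨i, h⟩ := fun i h => dif_pos h
  have hcnC : ∀ i ∉ C, c i = 0 := fun i h => dif_neg h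
  have hsum : ∀ f : Fin m → F, ∑ i : Fin m, c i * f i = ∑ i : ↥C, g i * f (i : Fin m) := by
    intro f
    calc ∑ i : Fin m, c i * f i
        = ∑ i ∈ C, c i * f i := (Finset.sum_subset (Finset.subset_univ C) fun i _ hi => by
            rw [hcnC i hi, zero_mul]).symm
      _ = ∑ i : ↥C, c (i : Fin m) * f (i : Fin m) := (Finset.sum_coe_sort C _).symm
      _ = ∑ i : ↥C, g i * f (i : Fin m) := Finset.sum_congr rfl fun i _ => by rw [hcC _ i.2]
  have hvm : Matrix.vecMul c A = 0 := by
    funext j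
    have := congrFun hg0 j
    simpa [Matrix.vecMul, dotProduct, hsum (fun i => A i j)] using this
  refine ⟨c, hvm, fun i hi => ?_, hcnC⟩
  -- all entries of `c` on `C` are nonzero, by minimality
  intro hci
  have hE : LinearIndependent F (fun j : ↥(C.erase i) => A (j : Fin m)) :=
    hindep _ (Finset.erase_ssubset hi)
  rw [Fintype.linearIndependent_iff] at hE
  have hzero : ∀ j : ↥C, g j = 0 := by
    have hsum' : ∑ j : ↥(C.erase i), g ⟨(j : Fin m), Finset.mem_of_mem_erase j.2⟩ •
        A (j : Fin m) = 0 := by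
      have : ∑ j : ↥(C.erase i), g ⟨(j : Fin m), Finset.mem_of_mem_erase j.2⟩ •
          A (j : Fin m) = ∑ j ∈ C.erase i, c j • A j := by
        rw [← Finset.sum_coe_sort (C.erase i) (fun j => c j • A j)]
        exact Finset.sum_congr rfl fun j _ => by rw [hcC _ (Finset.mem_of_mem_erase j.2)]
      rw [this, Finset.sum_erase _ (by rw [hcC i hi] at hci; rw [hcC i hi, hci, zero_smul])]
      rw [← Finset.sum_coe_sort C (fun j => c j • A j), ← hg0]
      exact Finset.sum_congr rfl fun j _ => by rw [hcC _ j.2]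
    intro j
    by_cases hji : (j : Fin m) = i
    · have : c (j : Fin m) = 0 := by rw [hji]; exact hci
      rw [hcC _ j.2] at this
      exact this
    · have hjE : (j : Fin m) ∈ C.erase i := Finset.mem_erase.mpr ⟨hji, j.2⟩
      exact hE (fun k => g ⟨(k : Fin m), Finset.mem_of_mem_erase k.2⟩) hsum' ⟨j, hjE⟩
  exact hi0 (hzero i0)

/-- Key lemma: if every circuit contained in `J` is consistent for `h`,
then `J` itself is consistent for `h`. -/
lemma consistent_of_circuits (A : Matrix (Fin m) (Fin n) F) (h : Fin m → F) :
    ∀ J : Finset (Fin m), (∀ C ⊆ J, IsCircuit A C → Consistent A C h) →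
      Consistent A J h := by
  intro J
  induction J using Finset.strongInduction with
  | _ J ih =>
    intro hcirc
    by_cases hind : LinearIndependent F (fun i : ↥J => A (i : Fin m))
    · exact consistent_of_linearIndependent A J hind h
    · obtain ⟨C, hCJ, hC⟩ := exists_circuit_subset A J hind
      have hCne : C.Nonempty := by
        rcases Finset.eq_empty_or_nonempty C with rfl | hne
        · exact absurd (linearIndependent_empty_type) hC.1
        · exact hne
      obtain ⟨j, hjC⟩ := hCne
      have hjJ : j ∈ J := hCJ hjC
      -- solution on J.erase j
      obtain ⟨x, hx⟩ := ih (J.erase j) (Finset.erase_ssubset hjJ)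
        (fun C' hC' hcirc' => hcirc C' (hC'.trans (Finset.erase_subset j J)) hcirc')
      -- solution on C
      obtain ⟨y, hy⟩ := hcirc C hCJ hC
      -- circuit vector
      obtain ⟨c, hcA, hcne, hczero⟩ := exists_circuitVector A C hC
      have key : ∀ z : Fin n → F, ∑ i : Fin m, c i * (A i ⬝ᵥ z) = 0 := by
        intro z
        have : c ⬝ᵥ A.mulVec z = Matrix.vecMul c A ⬝ᵥ z := Matrix.dotProduct_mulVec c A z
        rw [hcA] at this
        simpa [dotProduct, Matrix.mulVec] using this
      have hxj : A j ⬝ᵥ x = h j := by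
        have h1 := key x
        have h2 := key y
        have e1 : ∑ i : Fin m, c i * (A i ⬝ᵥ x)
            = c j * (A j ⬝ᵥ x) + ∑ i ∈ Finset.univ.erase j, c i * (A i ⬝ᵥ x) :=
          (Finset.add_sum_erase _ _ (Finset.mem_univ j)).symm
        have e2 : ∑ i : Fin m, c i * (A i ⬝ᵥ y)
            = c j * h j + ∑ i ∈ Finset.univ.erase j, c i * (A i ⬝ᵥ x) := by
          rw [← hy j hjC, ← Finset.add_sum_erase _ (fun i => c i * (A i ⬝ᵥ y)) (Finset.mem_univ j)]
          congr 1
          refine Finset.sum_congr rfl fun i hi => ?_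
          have hij : i ≠ j := (Finset.mem_erase.mp hi).1
          by_cases hiC : i ∈ C
          · rw [hy i hiC, hx i (Finset.mem_erase.mpr ⟨hij, hCJ hiC⟩)]
          · rw [hczero i hiC, zero_mul, zero_mul]
        have hAx : c j * (A j ⬝ᵥ x) + ∑ i ∈ Finset.univ.erase j, c i * (A i ⬝ᵥ x) = 0 := by
          rw [← e1]; exact h1
        have hBx : c j * h j + ∑ i ∈ Finset.univ.erase j, c i * (A i ⬝ᵥ x) = 0 := by
          rw [← e2]; exact h2
        exact mul_left_cancel₀ (hcne j hjC) (add_right_cancel (hAx.trans hBx.symm))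
      refine ⟨x, fun i hiJ => ?_⟩
      by_cases hij : i = j
      · rw [hij]; exact hxj
      · exact hx i (Finset.mem_erase.mpr ⟨hij, hiJ⟩)

/-- **Corollary 2.3.** `I_g ⊆ I_h` iff `C_g ⊆ C_h`; in particular
`I_g = I_h` iff `C_g = C_h`. -/
theorem Iset_subset_iff_Cset_subset
    (hm : 0 < m) (hn : 0 < n) (A : Matrix (Fin m) (Fin n) F) (g h : Fin m → F) :
    (Iset A g ⊆ Iset A h ↔ Cset A g ⊆ Cset A h) ∧
      (Iset A g = Iset A h ↔ Cset A g = Cset A h) := by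
  have main : ∀ g' h' : Fin m → F, (Iset A g' ⊆ Iset A h' ↔ Cset A g' ⊆ Cset A h') := by
    intro g' h'
    constructor
    · intro hsub C hC
      exact ⟨hsub hC.1, hC.2⟩
    · intro hsub J hJ
      obtain ⟨x, hx⟩ := hJ
      apply consistent_of_circuits
      intro C hCJ hC
      have hCg : C ∈ Cset A g' := ⟨⟨x, fun i hi => hx i (hCJ hi)⟩, hC⟩
      exact (hsub hCg).1
  refine ⟨main g h, ?_⟩
  constructor
  · intro he
    exact Set.Subset.antisymm ((main g h).mp he.subset) ((main h g).mp he.symm.subset)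
  · intro he
    exact Set.Subset.antisymm ((main g h).mpr he.subset) ((main h g).mpr he.symm.subset)
end

section
/- Write χ(A_g, t) = Σ_{k≥0} (−1)^k a_k(g) t^{n−k}. Then for every g ∈ F^m and every k ≥ 0, a_k(0) ≤ a_k(g); that is, the (unsigned) coefficients of the characteristic polynomial of the central arrangement A_0 (equivalently, of the matroid represented by the rows of A) are bounded above by the corresponding coefficients of χ(A_g, t). -/
open Matrix

variable {F : Type*} [Field F] {m n : ℕ}

/-- The intersection poset of the arrangement `{H i}` of hyperplanes of the ambient space
`V`: `V` together with all nonempty intersections of subfamilies, i.e. the collection of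
nonempty sets of the form `V ∩ ⋂ i ∈ S, H i` (the empty subfamily `S = ∅` yields `V`);
it is ordered by reverse inclusion. -/
def flats {E ι : Type*} (V : Set E) (H : ι → Set E) : Set (Set E) :=
  {W | (∃ S : Set ι, W = V ∩ ⋂ i ∈ S, H i) ∧ W.Nonempty}

lemma flats_finite {E ι : Type*} [Finite ι] (V : Set E) (H : ι → Set E) :
    (flats V H).Finite := by
  have hsub : flats V H ⊆ (fun S : Set ι => V ∩ ⋂ i ∈ S, H i) '' Set.univ := by
    rintro W ⟨⟨S, rfl⟩, -⟩
    exact ⟨S, Set.mem_univ _, rfl⟩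
  exact (Set.finite_univ.image _).subset hsub

lemma self_mem_flats {E ι : Type*} {V : Set E} (H : ι → Set E) (hV : V.Nonempty) :
    V ∈ flats V H :=
  ⟨⟨∅, by simp⟩, hV⟩

/-- The dimension of a subset of an `F`-vector space: the dimension of the direction of its
affine span. -/
noncomputable def adim (F : Type*) [Field F] {E : Type*} [AddCommGroup E] [Module F E]
    (W : Set E) : ℕ :=
  Module.finrank F (affineSpan F W).direction

open Classical in
/-- The characteristic polynomial `χ(B, t) = ∑_{W ∈ L(B)} μ(V, W) t^(dim W)` of the
arrangement `B = {H i}` of hyperplanes of the ambient space `V`, where `μ` is the Möbius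
function of the intersection poset `L(B)` ordered by reverse inclusion (so the Möbius value
`μ(V, W)` of the reverse-inclusion poset is `IncidenceAlgebra.mu` from `W` to `V` in the
inclusion order). -/
noncomputable def chi (F : Type*) [Field F] {E ι : Type*} [AddCommGroup E] [Module F E]
    [Finite ι] (V : Set E) (H : ι → Set E) : Polynomial ℤ :=
  letI : Fintype ↥(flats V H) := (flats_finite V H).fintype
  letI : LocallyFiniteOrder ↥(flats V H) := Fintype.toLocallyFiniteOrder
  if hV : V.Nonempty then
    ∑ W : ↥(flats V H),
      Polynomial.C (IncidenceAlgebra.mu ℤ W (⟨V, self_mem_flats H hV⟩ : ↥(flats V H))) *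
        Polynomial.X ^ adim F (W : Set E)
  else 0

/-- The affine hyperplane `H_{ρ_i, g_i} = {x ∈ F^n : ρ_i · x = g_i}` of the arrangement
`A_g`. -/
def Haff (A : Matrix (Fin m) (Fin n) F) (g : Fin m → F) (i : Fin m) : Set (Fin n → F) :=
  {x | A i ⬝ᵥ x = g i}
namespace Stmt13

open Finset Submodule

variable {F : Type*} [Field F] {m n : ℕ}

/-- The affine flat cut out by the equations indexed by `S`. -/
def flat (A : Matrix (Fin m) (Fin n) F) (g : Fin m → F) (S : Finset (Fin m)) :
    Set (Fin n → F) := {x | ∀ i ∈ S, A i ⬝ᵥ x = g i}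

/-- The rank of the subset `S` of rows. -/
noncomputable def rk (A : Matrix (Fin m) (Fin n) F) (S : Finset (Fin m)) : ℕ :=
  Module.finrank F (span F (A '' ↑S) : Submodule F (Fin n → F))

/-- Independence of the rows indexed by `S`. -/
def Indep (A : Matrix (Fin m) (Fin n) F) (S : Finset (Fin m)) : Prop :=
  LinearIndependent F (fun i : ↥S => A (i : Fin m))

variable {A : Matrix (Fin m) (Fin n) F} {g : Fin m → F} {S T I : Finset (Fin m)}

lemma consistent_iff_nonempty : Consistent A S g ↔ (flat A g S).Nonempty := Iff.rfl

lemma consistent_zero : Consistent A S (0 : Fin m → F) :=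
  ⟨0, fun j _ => by simp⟩

lemma Consistent.subset (h : Consistent A S g) (hTS : T ⊆ S) : Consistent A T g := by
  obtain ⟨x, hx⟩ := h
  exact ⟨x, fun j hj => hx j (hTS hj)⟩

lemma vecMul_eq_sum' (c : Fin m → F) : Matrix.vecMul c A = ∑ i, c i • A i := by
  ext j
  simp [Matrix.vecMul, dotProduct, Finset.sum_apply]

lemma not_indep_iff :
    ¬ Indep A S ↔ ∃ c : Fin m → F, c ≠ 0 ∧ (∀ i, c i ≠ 0 → i ∈ S) ∧
      Matrix.vecMul c A = 0 := by
  classical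
  rw [Indep, Fintype.not_linearIndependent_iff]
  constructor
  · rintro ⟨d, hd0, i0, hi0⟩
    refine ⟨fun i => if h : i ∈ S then d ⟨i, h⟩ else 0, ?_, ?_, ?_⟩
    · intro h
      apply hi0
      have := congrFun h (i0 : Fin m)
      simpa [i0.2] using this
    · intro i hi
      by_contra h
      simp [h] at hi
    · rw [vecMul_eq_sum']
      rw [← Finset.sum_subset (Finset.subset_univ S)]
      · rw [← hd0, Finset.univ_eq_attach,
          ← Finset.sum_attach S (fun i => (if h : i ∈ S then d ⟨i, h⟩ else 0) • A i)]
        apply Finset.sum_congr rfl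
        intro i _
        simp [i.2]
      · intro i _ hi
        simp [hi]
  · rintro ⟨c, hc0, hcs, hcA⟩
    refine ⟨fun i => c i, ?_, ?_⟩
    · rw [vecMul_eq_sum'] at hcA
      rw [← Finset.sum_subset (Finset.subset_univ S)] at hcA
      · rw [← hcA, Finset.univ_eq_attach, ← Finset.sum_attach S (fun i => c i • A i)]
      · intro i _ hi
        have : c i = 0 := by_contra fun h => hi (hcs i h)
        simp [this]
    · obtain ⟨i, hi⟩ := Function.ne_iff.1 hc0
      exact ⟨⟨i, hcs i hi⟩, hi⟩

lemma Indep.subset (h : Indep A S) (hTS : T ⊆ S) : Indep A T :=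
  h.comp (Set.inclusion (fun x hx => hTS hx)) (Set.inclusion_injective (fun x hx => hTS hx))

lemma IsCircuit.nonempty (h : IsCircuit A I) : I.Nonempty := by
  rcases I.eq_empty_or_nonempty with rfl | h'
  · exact absurd (linearIndependent_empty_type) h.1
  · exact h'

/-- Every circuit has a circuit vector. -/
lemma IsCircuit.exists_circuitVector (h : IsCircuit A I) :
    ∃ c, IsCircuitVector A I c := by
  classical
  obtain ⟨c, hc0, hcs, hcA⟩ := not_indep_iff.1 h.1
  refine ⟨c, hcA, ?_, fun i hi => by_contra fun h' => hi (hcs i h')⟩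
  intro i hiI hci
  -- otherwise c witnesses dependence of I.erase i
  have hdep : ¬ Indep A (I.erase i) := by
    rw [not_indep_iff]
    refine ⟨c, hc0, ?_, hcA⟩
    intro j hj
    refine Finset.mem_erase.2 ⟨?_, hcs j hj⟩
    rintro rfl
    exact hj hci
  exact hdep (h.2 _ (Finset.erase_ssubset hiI))


lemma exists_circuit_of_not_indep (h : ¬ Indep A S) : ∃ I ⊆ S, IsCircuit A I := by
  classical
  have hne : (S.powerset.filter (fun T => ¬ Indep A T)).Nonempty :=
    ⟨S, Finset.mem_filter.2 ⟨Finset.mem_powerset_self S, h⟩⟩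
  obtain ⟨I, hI, hmin⟩ := Finset.exists_min_image _ (fun T => T.card) hne
  rw [Finset.mem_filter, Finset.mem_powerset] at hI
  refine ⟨I, hI.1, hI.2, ?_⟩
  intro J hJ
  by_contra hJdep
  have hJmem : J ∈ S.powerset.filter (fun T => ¬ Indep A T) :=
    Finset.mem_filter.2 ⟨Finset.mem_powerset.2 (hJ.1.trans hI.1), hJdep⟩
  exact absurd (hmin J hJmem) (not_le.2 (Finset.card_lt_card hJ))

lemma image_coe_eq_range (S : Finset (Fin m)) :
    A '' ↑S = Set.range (fun i : ↥S => A (i : Fin m)) := by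
  ext v
  constructor
  · rintro ⟨i, hi, rfl⟩
    exact ⟨⟨i, Finset.mem_coe.1 hi⟩, rfl⟩
  · rintro ⟨i, rfl⟩
    exact ⟨i, Finset.mem_coe.2 i.2, rfl⟩

lemma Indep.rk_eq_card (h : Indep A S) : rk A S = S.card := by
  rw [rk, image_coe_eq_range, finrank_span_eq_card h, Fintype.card_coe]

lemma rk_le_n : rk A S ≤ n := by
  have := Submodule.finrank_le (span F (A '' ↑S) : Submodule F (Fin n → F))
  rwa [Module.finrank_pi, Fintype.card_fin] at this

lemma Indep.consistent (h : Indep A S) : Consistent A S g := by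
  classical
  set M : Matrix ↥S (Fin n) F := Matrix.of (fun i : ↥S => A (i : Fin m)) with hM
  have hrank : M.rank = Fintype.card ↥S := by
    rw [Matrix.rank_eq_finrank_span_row]
    exact finrank_span_eq_card h
  have htop : LinearMap.range M.mulVecLin = ⊤ := by
    apply Submodule.eq_top_of_finrank_eq
    rw [show Module.finrank F (LinearMap.range M.mulVecLin) = M.rank from rfl, hrank,
      Module.finrank_pi]
  have hsurj : Function.Surjective M.mulVecLin := LinearMap.range_eq_top.1 htop
  obtain ⟨x, hx⟩ := hsurj (fun i : ↥S => g (i : Fin m))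
  refine ⟨x, fun j hj => ?_⟩
  exact congrFun hx ⟨j, hj⟩

lemma sum_mul_dot (y : Fin m → F) (x : Fin n → F) :
    ∑ i, y i * (A i ⬝ᵥ x) = Matrix.vecMul y A ⬝ᵥ x := by
  rw [← Matrix.dotProduct_mulVec]
  rfl

/-- The key extension step: if `S` is consistent and `y` is a linear relation supported in
`insert f S`, orthogonal to `g`, with `y f ≠ 0`, then `insert f S` is consistent. -/
lemma consistent_insert_of_rel {f : Fin m} {y : Fin m → F} (hS : Consistent A S g)
    (hyA : Matrix.vecMul y A = 0) (hyg : y ⬝ᵥ g = 0)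
    (hsupp : ∀ i, y i ≠ 0 → i ∈ insert f S) (hyf : y f ≠ 0) :
    Consistent A (insert f S) g := by
  obtain ⟨x, hx⟩ := hS
  refine ⟨x, fun j hj => ?_⟩
  rcases Finset.mem_insert.1 hj with rfl | hjS
  swap
  · exact hx j hjS
  have h1 : ∑ i, y i * (A i ⬝ᵥ x - g i) = 0 := by
    have h2 := sum_mul_dot (A := A) y x
    rw [hyA, zero_dotProduct] at h2
    calc ∑ i, y i * (A i ⬝ᵥ x - g i)
        = ∑ i, y i * (A i ⬝ᵥ x) - ∑ i, y i * g i := by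
          rw [← Finset.sum_sub_distrib]
          exact Finset.sum_congr rfl fun i _ => mul_sub _ _ _
      _ = 0 := by rw [h2, ← dotProduct, hyg, sub_zero]
  have h3 : y j * (A j ⬝ᵥ x - g j) = 0 := by
    rw [← h1]
    symm
    apply Finset.sum_eq_single
    · intro i _ hij
      by_cases hyi : y i = 0
      · rw [hyi, zero_mul]
      · have hiS : i ∈ S := by
          rcases Finset.mem_insert.1 (hsupp i hyi) with rfl | h
          · exact absurd rfl hij
          · exact h
        rw [hx i hiS, sub_self, mul_zero]
    · intro h
      exact absurd (Finset.mem_univ j) h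
  rcases mul_eq_zero.1 h3 with h | h
  · exact absurd h hyf
  · exact sub_eq_zero.1 h

lemma IsCircuitVector.dot_g_eq_zero {c : Fin m → F} (hc : IsCircuitVector A I c)
    (hI : Consistent A I g) : c ⬝ᵥ g = 0 := by
  obtain ⟨x, hx⟩ := hI
  obtain ⟨hcA, hcI, hcI'⟩ := hc
  have h2 := sum_mul_dot (A := A) c x
  rw [hcA, zero_dotProduct] at h2
  rw [dotProduct, ← h2]
  apply Finset.sum_congr rfl
  intro i _
  by_cases hi : i ∈ I
  · rw [hx i hi]
  · rw [hcI' i hi, zero_mul, zero_mul]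

lemma mem_span_erase_of_rel {c : Fin m → F} {e : Fin m} (hcA : Matrix.vecMul c A = 0)
    (hsupp : ∀ i, c i ≠ 0 → i ∈ S) (hce : c e ≠ 0) :
    A e ∈ span F (A '' ↑(S.erase e)) := by
  classical
  have heS : e ∈ S := hsupp e hce
  have h0 : ∑ i, c i • A i = 0 := by rw [← vecMul_eq_sum', hcA]
  have h1 : ∑ i ∈ S, c i • A i = 0 := by
    rw [← h0]
    apply Finset.sum_subset (Finset.subset_univ S)
    intro i _ hi
    have : c i = 0 := by_contra fun h => hi (hsupp i h)
    rw [this, zero_smul]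
  have h2 : c e • A e = -∑ i ∈ S.erase e, c i • A i := by
    rw [eq_neg_iff_add_eq_zero, add_comm, Finset.sum_erase_add S _ heS, h1]
  have h3 : A e = (c e)⁻¹ • (c e • A e) := by
    rw [smul_smul, inv_mul_cancel₀ hce, one_smul]
  rw [h3, h2]
  apply Submodule.smul_mem
  apply Submodule.neg_mem
  apply Submodule.sum_mem
  intro i hi
  exact Submodule.smul_mem _ _
    (Submodule.subset_span (Set.mem_image_of_mem _ (Finset.mem_coe.2 hi)))

lemma span_eq_span_erase {e : Fin m} (he : A e ∈ span F (A '' ↑(S.erase e)))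
    {T : Finset (Fin m)} (h1 : S.erase e ⊆ T) (h2 : T ⊆ insert e S) :
    span F (A '' ↑T) = span F (A '' ↑(S.erase e)) := by
  apply le_antisymm
  · rw [Submodule.span_le]
    rintro _ ⟨i, hi, rfl⟩
    rcases Finset.mem_insert.1 (h2 (Finset.mem_coe.1 hi)) with rfl | hiS
    · exact he
    · by_cases hie : i = e
      · subst hie; exact he
      · exact Submodule.subset_span ⟨i, Finset.mem_coe.2 (Finset.mem_erase.2 ⟨hie, hiS⟩), rfl⟩
  · exact Submodule.span_mono (Set.image_mono (Finset.coe_subset.2 h1))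

lemma not_indep_insert_of_mem_span {f : Fin m} {B : Finset (Fin m)} (hf : f ∉ B)
    (hspan : A f ∈ span F (A '' ↑B)) : ¬ Indep A (insert f B) := by
  intro hindep
  have hx : (⟨f, Finset.mem_insert_self f B⟩ : ↥(insert f B)) ∉
      {i : ↥(insert f B) | (i : Fin m) ∈ B} := by
    simp [hf]
  have := hindep.notMem_span_image (s := {i : ↥(insert f B) | (i : Fin m) ∈ B}) hx
  apply this
  have himg : (fun i : ↥(insert f B) => A (i : Fin m)) ''
      {i : ↥(insert f B) | (i : Fin m) ∈ B} = A '' ↑B := by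
    ext v
    constructor
    · rintro ⟨i, hi, rfl⟩
      exact ⟨i, hi, rfl⟩
    · rintro ⟨i, hi, rfl⟩
      exact ⟨⟨i, Finset.mem_insert_of_mem hi⟩, hi, rfl⟩
  rw [himg]
  exact hspan

/-- Given a relation `y` with `y f ≠ 0`, there is a circuit through `f` inside the
support of `y`. -/
lemma exists_circuit_mem_support {y : Fin m → F} {f : Fin m}
    (hyA : Matrix.vecMul y A = 0) (hyf : y f ≠ 0) :
    ∃ I, IsCircuit A I ∧ f ∈ I ∧ ∀ i ∈ I, y i ≠ 0 := by
  classical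
  set T : Finset (Fin m) := (Finset.univ.filter fun i => y i ≠ 0).erase f with hT
  have hfT : A f ∈ span F (A '' ↑T) := by
    apply mem_span_erase_of_rel hyA _ hyf
    intro i hi
    simp [hi]
  -- take B ⊆ T minimal with A f ∈ span (A '' B)
  have hne : (T.powerset.filter
      (fun B : Finset (Fin m) => A f ∈ span F (A '' (↑B : Set (Fin m))))).Nonempty :=
    ⟨T, Finset.mem_filter.2 ⟨Finset.mem_powerset_self T, hfT⟩⟩
  obtain ⟨B, hB, hmin⟩ := Finset.exists_min_image _ (fun B => B.card) hne
  rw [Finset.mem_filter, Finset.mem_powerset] at hB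
  obtain ⟨hBT, hBspan⟩ := hB
  have hfB : f ∉ B := fun h => (Finset.mem_erase.1 (hBT h)).1 rfl
  have hBmin : ∀ B' ⊂ B, A f ∉ span F (A '' ↑B') := by
    intro B' hB' hB'span
    have : B' ∈ T.powerset.filter
        (fun B : Finset (Fin m) => A f ∈ span F (A '' (↑B : Set (Fin m)))) :=
      Finset.mem_filter.2 ⟨Finset.mem_powerset.2 (hB'.1.trans hBT), hB'span⟩
    exact absurd (hmin B' this) (not_le.2 (Finset.card_lt_card hB'))
  have hBindep : Indep A B := by
    by_contra hdep
    obtain ⟨c, hc0, hcs, hcA⟩ := not_indep_iff.1 hdep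
    obtain ⟨b, hb⟩ := Function.ne_iff.1 hc0
    have hbB : b ∈ B := hcs b hb
    have hmem : A b ∈ span F (A '' ↑(B.erase b)) := mem_span_erase_of_rel hcA hcs hb
    have hsp := span_eq_span_erase (S := B) hmem (Finset.erase_subset b B)
      (Finset.subset_insert _ _)
    exact hBmin (B.erase b) (Finset.erase_ssubset hbB) (by rw [← hsp]; exact hBspan)
  refine ⟨insert f B, ⟨not_indep_insert_of_mem_span hfB hBspan, ?_⟩,
    Finset.mem_insert_self f B, ?_⟩
  · -- proper subsets are independent
    intro J hJ
    obtain ⟨x, hxI, hxJ⟩ := Finset.exists_of_ssubset hJ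
    have hJsub : J ⊆ (insert f B).erase x := fun j hj =>
      Finset.mem_erase.2 ⟨fun h => hxJ (h ▸ hj), hJ.1 hj⟩
    have : Indep A ((insert f B).erase x) := by
      rcases Finset.mem_insert.1 hxI with rfl | hxB
      · rwa [Finset.erase_insert hfB]
      · have hxf : x ≠ f := fun h => hfB (h ▸ hxB)
        have herase : (insert f B).erase x = insert f (B.erase x) := by
          ext u
          simp only [Finset.mem_erase, Finset.mem_insert]
          constructor
          · rintro ⟨hu, rfl | hu2⟩
            · exact Or.inl rfl
            · exact Or.inr ⟨hu, hu2⟩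
          · rintro (rfl | ⟨hu1, hu2⟩)
            · exact ⟨hxf.symm, Or.inl rfl⟩
            · exact ⟨hu1, Or.inr hu2⟩
        rw [herase]
        by_contra hdep
        obtain ⟨c, hc0, hcs, hcA⟩ := not_indep_iff.1 hdep
        by_cases hcf : c f = 0
        · -- relation inside B.erase x ⊆ B
          apply not_indep_iff.2 _ hBindep
          refine ⟨c, hc0, ?_, hcA⟩
          intro i hi
          rcases Finset.mem_insert.1 (hcs i hi) with rfl | hiB
          · exact absurd hcf hi
          · exact Finset.mem_of_mem_erase hiB
        · -- A f ∈ span (B.erase x), contradicting minimality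
          have hmem : A f ∈ span F (A '' ↑((insert f (B.erase x)).erase f)) :=
            mem_span_erase_of_rel hcA hcs hcf
          rw [Finset.erase_insert (fun h => hfB (Finset.mem_of_mem_erase h))] at hmem
          exact hBmin (B.erase x) (Finset.erase_ssubset hxB) hmem
    exact this.subset hJsub
  · intro i hi
    rcases Finset.mem_insert.1 hi with rfl | hiB
    · exact hyf
    · exact (Finset.mem_filter.1 (Finset.mem_of_mem_erase (hBT hiB))).2


/-- `e` is an active element for `S`: there is a consistent circuit with minimum `e` whose
broken circuit is contained in `S`. -/
def Active (A : Matrix (Fin m) (Fin n) F) (g : Fin m → F) (S : Finset (Fin m))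
    (e : Fin m) : Prop :=
  ∃ I : Finset (Fin m), IsCircuit A I ∧ Consistent A I g ∧ e ∈ I ∧ (∀ x ∈ I, e ≤ x) ∧
    I.erase e ⊆ S

lemma Active.mono (h : Active A g S e) (hST : S ⊆ T) : Active A g T e := by
  obtain ⟨I, h1, h2, h3, h4, h5⟩ := h
  exact ⟨I, h1, h2, h3, h4, h5.trans hST⟩

lemma exists_active_of_dep (hS : Consistent A S g) (hdep : ¬ Indep A S) :
    ∃ e, Active A g S e := by
  obtain ⟨I, hIS, hI⟩ := exists_circuit_of_not_indep hdep
  have hne := IsCircuit.nonempty hI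
  refine ⟨I.min' hne, I, hI, Consistent.subset hS hIS, I.min'_mem hne,
    fun x hx => I.min'_le x hx,
    (Finset.erase_subset _ _).trans hIS⟩

lemma indep_of_not_active (hS : Consistent A S g) (h : ∀ e, ¬ Active A g S e) :
    Indep A S := by
  by_contra hdep
  obtain ⟨e, he⟩ := exists_active_of_dep hS hdep
  exact h e he

lemma exists_min_active (h : ∃ e, Active A g S e) :
    ∃ e, Active A g S e ∧ ∀ f, Active A g S f → e ≤ f := by
  classical
  obtain ⟨e0, he0⟩ := h
  obtain ⟨e, he, hmin⟩ := Finset.exists_min_image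
    (Finset.univ.filter fun e => Active A g S e) id
    ⟨e0, Finset.mem_filter.2 ⟨Finset.mem_univ _, he0⟩⟩
  exact ⟨e, (Finset.mem_filter.1 he).2,
    fun f hf => hmin f (Finset.mem_filter.2 ⟨Finset.mem_univ _, hf⟩)⟩

lemma Active.mem_span (h : Active A g S e) :
    A e ∈ span F (A '' (↑(S.erase e) : Set (Fin m))) := by
  obtain ⟨I, hI, _, heI, _, hIS⟩ := h
  obtain ⟨c, hcA, hcI, hcI'⟩ := IsCircuit.exists_circuitVector hI
  have h1 : A e ∈ span F (A '' (↑(I.erase e) : Set (Fin m))) :=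
    mem_span_erase_of_rel hcA (fun i hi => by_contra fun h' => hi (hcI' i h')) (hcI e heI)
  refine Submodule.span_mono (Set.image_mono ?_) h1
  intro x hx
  have hx' := Finset.mem_coe.1 hx
  exact Finset.mem_coe.2 (Finset.mem_erase.2 ⟨(Finset.mem_erase.1 hx').1,
    hIS (Finset.mem_coe.1 hx)⟩)

lemma Active.rk_insert (h : Active A g S e) : rk A (insert e S) = rk A S := by
  rw [rk, rk, span_eq_span_erase h.mem_span
      ((Finset.erase_subset e S).trans (Finset.subset_insert e S)) (Finset.Subset.refl _),
    span_eq_span_erase h.mem_span (Finset.erase_subset e S) (Finset.subset_insert e S)]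

lemma Active.rk_erase (h : Active A g S e) : rk A (S.erase e) = rk A S := by
  conv_rhs => rw [rk, span_eq_span_erase h.mem_span (Finset.erase_subset e S)
    (Finset.subset_insert e S)]
  rfl

lemma Active.consistent_insert (h : Active A g S e) (hS : Consistent A S g) :
    Consistent A (insert e S) g := by
  obtain ⟨I, hI, hIcons, heI, _, hIS⟩ := h
  obtain ⟨c, hcA, hcI, hcI'⟩ := IsCircuit.exists_circuitVector hI
  refine consistent_insert_of_rel hS hcA (IsCircuitVector.dot_g_eq_zero ⟨hcA, hcI, hcI'⟩ hIcons)
    ?_ (hcI e heI)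
  intro i hi
  have hiI : i ∈ I := by_contra fun h' => hi (hcI' i h')
  by_cases hie : i = e
  · exact hie ▸ Finset.mem_insert_self e S
  · exact Finset.mem_insert_of_mem (hIS (Finset.mem_erase.2 ⟨hie, hiI⟩))

lemma Active.self_insert (h : Active A g S e) : Active A g (insert e S) e :=
  h.mono (Finset.subset_insert e S)

lemma Active.self_erase (h : Active A g S e) : Active A g (S.erase e) e := by
  obtain ⟨I, h1, h2, h3, h4, h5⟩ := h
  refine ⟨I, h1, h2, h3, h4, ?_⟩
  intro x hx
  exact Finset.mem_erase.2 ⟨(Finset.mem_erase.1 hx).1, h5 hx⟩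

/-- The crucial stability property: inserting the minimal active element does not create
smaller active elements. -/
lemma active_insert_le (hS : Consistent A S g) (he : Active A g S e)
    (hmin : ∀ f, Active A g S f → e ≤ f) {f : Fin m} (hf : Active A g (insert e S) f) :
    e ≤ f := by
  by_contra hlt
  push_neg at hlt
  obtain ⟨J, hJ, hJcons, hfJ, hJmin, hJS⟩ := hf
  by_cases heJ : e ∈ J
  swap
  · -- the witness avoids e, so f is already active for S
    refine absurd (hmin f ⟨J, hJ, hJcons, hfJ, hJmin, fun x hx => ?_⟩) (not_le.2 hlt)
    rcases Finset.mem_insert.1 (hJS hx) with rfl | hxS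
    · exact absurd (Finset.mem_of_mem_erase hx) heJ
    · exact hxS
  obtain ⟨I, hI, hIcons, heI, hImin, hIS⟩ := he
  obtain ⟨cI, hcIA, hcII, hcII'⟩ := IsCircuit.exists_circuitVector hI
  obtain ⟨cJ, hcJA, hcJJ, hcJJ'⟩ := IsCircuit.exists_circuitVector hJ
  have hfI : f ∉ I := fun h => absurd (hImin f h) (not_le.2 hlt)
  have hfe : f ≠ e := ne_of_lt hlt
  set y : Fin m → F := cJ e • cI - cI e • cJ with hy
  have hyA : Matrix.vecMul y A = 0 := by
    rw [hy, Matrix.sub_vecMul, Matrix.smul_vecMul, Matrix.smul_vecMul, hcIA, hcJA,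
      smul_zero, smul_zero, sub_zero]
  have hyf : y f ≠ 0 := by
    have : y f = cJ e * cI f - cI e * cJ f := rfl
    rw [this, hcII' f hfI, mul_zero, zero_sub, neg_ne_zero]
    exact mul_ne_zero (hcII e heI) (hcJJ f hfJ)
  have hye : y e = 0 := by
    have : y e = cJ e * cI e - cI e * cJ e := rfl
    rw [this, mul_comm, sub_self]
  have hyg : y ⬝ᵥ g = 0 := by
    rw [hy, sub_dotProduct, smul_dotProduct, smul_dotProduct,
      IsCircuitVector.dot_g_eq_zero ⟨hcIA, hcII, hcII'⟩ hIcons,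
      IsCircuitVector.dot_g_eq_zero ⟨hcJA, hcJJ, hcJJ'⟩ hJcons,
      smul_zero, smul_zero, sub_zero]
  -- support analysis: `y i ≠ 0 → i ∈ insert f S`, and moreover `i ≠ f → i ∈ S`
  have hsupp : ∀ i, y i ≠ 0 → i ≠ f → i ∈ S := by
    intro i hyi hif
    have hie : i ≠ e := fun h => hyi (h ▸ hye)
    have hiIJ : i ∈ I ∨ i ∈ J := by
      by_contra h
      push_neg at h
      apply hyi
      have : y i = cJ e * cI i - cI e * cJ i := rfl
      rw [this, hcII' i h.1, hcJJ' i h.2, mul_zero, mul_zero, sub_self]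
    rcases hiIJ with hiI | hiJ
    · exact hIS (Finset.mem_erase.2 ⟨hie, hiI⟩)
    · rcases Finset.mem_insert.1 (hJS (Finset.mem_erase.2 ⟨hif, hiJ⟩)) with rfl | hxS
      · exact absurd rfl hie
      · exact hxS
  have hsupp' : ∀ i, y i ≠ 0 → i ∈ insert f S := by
    intro i hyi
    by_cases hif : i = f
    · exact hif ▸ Finset.mem_insert_self f S
    · exact Finset.mem_insert_of_mem (hsupp i hyi hif)
  have hcons : Consistent A (insert f S) g := consistent_insert_of_rel hS hyA hyg hsupp' hyf
  obtain ⟨K, hK, hfK, hKy⟩ := exists_circuit_mem_support hyA hyf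
  -- K witnesses that f is active for S
  have hKsub : K ⊆ insert f S := fun i hi => hsupp' i (hKy i hi)
  have hKmin : ∀ x ∈ K, f ≤ x := by
    intro x hx
    have hyx := hKy x hx
    have hxIJ : x ∈ I ∨ x ∈ J := by
      by_contra h
      push_neg at h
      apply hyx
      have : y x = cJ e * cI x - cI e * cJ x := rfl
      rw [this, hcII' x h.1, hcJJ' x h.2, mul_zero, mul_zero, sub_self]
    rcases hxIJ with hxI | hxJ
    · exact le_of_lt (lt_of_lt_of_le hlt (hImin x hxI))
    · exact hJmin x hxJ
  have hKerase : K.erase f ⊆ S := by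
    intro x hx
    exact hsupp x (hKy x (Finset.mem_of_mem_erase hx)) (Finset.mem_erase.1 hx).1
  exact absurd (hmin f ⟨K, hK, Consistent.subset hcons hKsub, hfK, hKmin, hKerase⟩) (not_le.2 hlt)

lemma active_erase_le (he : Active A g S e)
    (hmin : ∀ f, Active A g S f → e ≤ f) {f : Fin m} (hf : Active A g (S.erase e) f) :
    e ≤ f :=
  hmin f (hf.mono (Finset.erase_subset e S))


open Classical in
/-- The sign-reversing involution: toggle the minimal active element. -/
noncomputable def phi (A : Matrix (Fin m) (Fin n) F) (g : Fin m → F)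
    (S : Finset (Fin m)) : Finset (Fin m) :=
  if h : ∃ e, Active A g S e then
    let e := Classical.choose (exists_min_active h)
    if e ∈ S then S.erase e else insert e S
  else S

section Phi

variable (hS : Consistent A S g) (hact : ∃ e, Active A g S e)

lemma phi_eq (hact : ∃ e, Active A g S e) :
    phi A g S = if Classical.choose (exists_min_active hact) ∈ S then
      S.erase (Classical.choose (exists_min_active hact))
    else insert (Classical.choose (exists_min_active hact)) S := by
  rw [phi, dif_pos hact]

lemma minact_spec (hact : ∃ e, Active A g S e) :
    Active A g S (Classical.choose (exists_min_active hact)) ∧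
      ∀ f, Active A g S f → Classical.choose (exists_min_active hact) ≤ f :=
  Classical.choose_spec (exists_min_active hact)

lemma phi_consistent (hS : Consistent A S g) (hact : ∃ e, Active A g S e) :
    Consistent A (phi A g S) g := by
  rw [phi_eq hact]
  obtain ⟨he, -⟩ := minact_spec hact
  split
  · exact Consistent.subset hS (Finset.erase_subset _ _)
  · exact Active.consistent_insert he hS

lemma phi_rk (hact : ∃ e, Active A g S e) : rk A (phi A g S) = rk A S := by
  rw [phi_eq hact]
  obtain ⟨he, -⟩ := minact_spec hact
  split
  · exact Active.rk_erase he
  · exact Active.rk_insert he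

lemma phi_active (hS : Consistent A S g) (hact : ∃ e, Active A g S e) :
    Active A g (phi A g S) (Classical.choose (exists_min_active hact)) ∧
      ∀ f, Active A g (phi A g S) f → Classical.choose (exists_min_active hact) ≤ f := by
  rw [phi_eq hact]
  obtain ⟨he, hmin⟩ := minact_spec hact
  split
  · exact ⟨Active.self_erase he, fun f hf => active_erase_le he hmin hf⟩
  · exact ⟨Active.self_insert he, fun f hf => active_insert_le hS he hmin hf⟩

lemma phi_phi (hS : Consistent A S g) (hact : ∃ e, Active A g S e) :
    phi A g (phi A g S) = S := by
  set e := Classical.choose (exists_min_active hact) with he_def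
  obtain ⟨he', hmin'⟩ := phi_active hS hact
  have hact2 : ∃ f, Active A g (phi A g S) f := ⟨e, he'⟩
  set e2 := Classical.choose (exists_min_active hact2) with he2_def
  obtain ⟨he2, hmin2⟩ := minact_spec hact2
  have hee2 : e2 = e := le_antisymm (hmin2 e he') (hmin' e2 he2)
  rw [phi_eq hact2, ← he2_def, hee2]
  rw [phi_eq hact, ← he_def]
  by_cases heS : e ∈ S
  · rw [if_pos heS, if_neg (Finset.notMem_erase e S), Finset.insert_erase heS]
  · rw [if_neg heS, if_pos (Finset.mem_insert_self e S), Finset.erase_insert heS]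

lemma phi_sign (hact : ∃ e, Active A g S e) :
    ((-1 : ℤ)) ^ (phi A g S).card = -(-1 : ℤ) ^ S.card := by
  rw [phi_eq hact]
  obtain ⟨he, -⟩ := minact_spec hact
  split
  · next h =>
    rw [Finset.card_erase_of_mem h]
    have hpos : 0 < S.card := Finset.card_pos.2 ⟨_, h⟩
    conv_rhs => rw [← Nat.succ_pred_eq_of_pos hpos]
    rw [pow_succ, Nat.pred_eq_sub_one]
    ring
  · next h =>
    rw [Finset.card_insert_of_notMem h, pow_succ]
    ring

lemma phi_ne (hact : ∃ e, Active A g S e) : phi A g S ≠ S := by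
  intro h
  have := phi_sign hact
  rw [h] at this
  have h2 : (2 : ℤ) * (-1) ^ S.card = 0 := by linarith
  rcases mul_eq_zero.1 h2 with h3 | h3
  · norm_num at h3
  · exact absurd h3 (pow_ne_zero _ (by norm_num))

end Phi

open Classical in
lemma sum_sign_eq (A : Matrix (Fin m) (Fin n) F) (g : Fin m → F) (k : ℕ) :
    ∑ S ∈ Finset.univ.filter (fun S : Finset (Fin m) => Consistent A S g ∧ rk A S = k),
      (-1 : ℤ) ^ S.card
    = (-1 : ℤ) ^ k * (Finset.univ.filter (fun S : Finset (Fin m) =>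
        Consistent A S g ∧ rk A S = k ∧ ∀ e, ¬ Active A g S e)).card := by
  classical
  set s := Finset.univ.filter (fun S : Finset (Fin m) => Consistent A S g ∧ rk A S = k)
    with hs_def
  set sfix := s.filter (fun S => ∀ e, ¬ Active A g S e) with hsfix_def
  set srest := s.filter (fun S => ¬ ∀ e, ¬ Active A g S e) with hsrest_def
  have hsplit : s = sfix ∪ srest := by
    rw [hsfix_def, hsrest_def, ← Finset.filter_or]
    symm
    apply Finset.filter_true_of_mem
    intro S _
    exact Classical.em _
  have hdisj : Disjoint sfix srest := by
    rw [hsfix_def, hsrest_def]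
    exact Finset.disjoint_filter_filter' _ _ (fun S => by tauto)
  have hsum : ∑ S ∈ s, (-1 : ℤ) ^ S.card
      = ∑ S ∈ sfix, (-1 : ℤ) ^ S.card + ∑ S ∈ srest, (-1 : ℤ) ^ S.card := by
    rw [hsplit, Finset.sum_union hdisj]
  have hrest : ∑ S ∈ srest, (-1 : ℤ) ^ S.card = 0 := by
    apply Finset.sum_involution (fun S _ => phi A g S)
    · intro S hSmem
      rw [hsrest_def, Finset.mem_filter] at hSmem
      have hact : ∃ e, Active A g S e := by
        have := hSmem.2
        push_neg at this
        exact this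
      rw [phi_sign hact]
      ring
    · intro S hSmem _
      rw [hsrest_def, Finset.mem_filter] at hSmem
      have hact : ∃ e, Active A g S e := by have := hSmem.2; push_neg at this; exact this
      exact phi_ne hact
    · intro S hSmem
      rw [hsrest_def, Finset.mem_filter] at hSmem
      rw [hs_def, Finset.mem_filter] at hSmem
      obtain ⟨⟨⟨-, hcons, hrk⟩, hnact⟩⟩ := And.intro hSmem trivial
      have hact : ∃ e, Active A g S e := by push_neg at hnact; exact hnact
      rw [hsrest_def, Finset.mem_filter, hs_def, Finset.mem_filter]
      refine ⟨⟨Finset.mem_univ _, phi_consistent hcons hact, (phi_rk hact).trans hrk⟩, ?_⟩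
      intro hall
      exact hall _ (phi_active hcons hact).1
    · intro S hSmem
      rw [hsrest_def, Finset.mem_filter, hs_def, Finset.mem_filter] at hSmem
      obtain ⟨⟨-, hcons, -⟩, hnact⟩ := hSmem
      have hact : ∃ e, Active A g S e := by push_neg at hnact; exact hnact
      exact phi_phi hcons hact
  have hfix : ∑ S ∈ sfix, (-1 : ℤ) ^ S.card = (-1 : ℤ) ^ k * sfix.card := by
    rw [Finset.sum_congr rfl (fun S hSmem => ?_), Finset.sum_const, nsmul_eq_mul, mul_comm]
    rw [hsfix_def, Finset.mem_filter, hs_def, Finset.mem_filter] at hSmem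
    obtain ⟨⟨-, hcons, hrk⟩, hnact⟩ := hSmem
    have hindep : Indep A S := indep_of_not_active hcons hnact
    rw [← hrk, ← Indep.rk_eq_card hindep]
  have hfixeq : sfix = Finset.univ.filter (fun S : Finset (Fin m) =>
      Consistent A S g ∧ rk A S = k ∧ ∀ e, ¬ Active A g S e) := by
    rw [hsfix_def, hs_def, Finset.filter_filter]
    apply Finset.filter_congr
    intro S _
    tauto
  rw [hsum, hrest, add_zero, hfix, hfixeq]

/-- Monotonicity of the fixed-point count: the central fixed points inject into those of `g`. -/
lemma fix_subset (A : Matrix (Fin m) (Fin n) F) (g : Fin m → F) (k : ℕ)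
    [DecidablePred (fun S : Finset (Fin m) =>
      Consistent A S (0 : Fin m → F) ∧ rk A S = k ∧ ∀ e, ¬ Active A (0 : Fin m → F) S e)]
    [DecidablePred (fun S : Finset (Fin m) =>
      Consistent A S g ∧ rk A S = k ∧ ∀ e, ¬ Active A g S e)] :
    Finset.univ.filter (fun S : Finset (Fin m) =>
      Consistent A S (0 : Fin m → F) ∧ rk A S = k ∧ ∀ e, ¬ Active A (0 : Fin m → F) S e) ⊆
    Finset.univ.filter (fun S : Finset (Fin m) =>
      Consistent A S g ∧ rk A S = k ∧ ∀ e, ¬ Active A g S e) := by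
  intro S hSmem
  rw [Finset.mem_filter] at hSmem ⊢
  obtain ⟨-, hcons0, hrk, hnact0⟩ := hSmem
  have hindep : Indep A S := indep_of_not_active hcons0 hnact0
  refine ⟨Finset.mem_univ _, Indep.consistent hindep, hrk, ?_⟩
  intro e hact
  apply hnact0 e
  obtain ⟨I, h1, h2, h3, h4, h5⟩ := hact
  exact ⟨I, h1, consistent_zero, h3, h4, h5⟩


lemma flat_nonempty_iff : (flat A g S).Nonempty ↔ Consistent A S g := Iff.rfl

lemma adim_flat (hS : Consistent A S g) : adim F (flat A g S) = n - rk A S := by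
  classical
  obtain ⟨x₀, hx₀⟩ := hS
  set M : Matrix ↥S (Fin n) F := Matrix.of (fun i : ↥S => A (i : Fin m)) with hM
  have hmem : ∀ x, x ∈ flat A g S ↔ M.mulVecLin x = fun i : ↥S => g (i : Fin m) := by
    intro x
    constructor
    · intro hx
      funext i
      exact hx i i.2
    · intro hx i hi
      exact congrFun hx ⟨i, hi⟩
  have hvs : vectorSpan F (flat A g S) = LinearMap.ker M.mulVecLin := by
    apply le_antisymm
    · rw [vectorSpan_def, Submodule.span_le]
      rintro v hv
      obtain ⟨a, ha, b, hb, rfl⟩ := hv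
      rw [SetLike.mem_coe, LinearMap.mem_ker]
      show M.mulVecLin (a -ᵥ b) = 0
      rw [show a -ᵥ b = a - b from rfl, map_sub, (hmem a).1 ha, (hmem b).1 hb, sub_self]
    · intro v hv
      rw [LinearMap.mem_ker] at hv
      have h1 : x₀ + v ∈ flat A g S := by
        rw [hmem, map_add, hv, add_zero]
        exact (hmem x₀).1 hx₀
      have := vsub_mem_vectorSpan F h1 hx₀
      have h2 : (x₀ + v) -ᵥ x₀ = v := by
        rw [vsub_eq_sub, add_sub_cancel_left]
      rwa [h2] at this
  rw [adim, direction_affineSpan, hvs]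
  have hrn := LinearMap.finrank_range_add_finrank_ker M.mulVecLin
  rw [Module.finrank_pi, Fintype.card_fin] at hrn
  have hrange : Module.finrank F (LinearMap.range M.mulVecLin) = rk A S := by
    rw [show Module.finrank F (LinearMap.range M.mulVecLin) = M.rank from rfl,
      Matrix.rank_eq_finrank_span_row, rk, image_coe_eq_range]
    rfl
  omega


open Classical in
/-- The Whitney-rank coefficient attached to a flat `W`. -/
noncomputable def nn (A : Matrix (Fin m) (Fin n) F) (g : Fin m → F)
    (W : Set (Fin n → F)) : ℤ :=
  ∑ S ∈ Finset.univ.filter (fun S : Finset (Fin m) => flat A g S = W), (-1 : ℤ) ^ S.card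

lemma flat_eq_inter (S : Finset (Fin m)) :
    flat A g S = Set.univ ∩ ⋂ i ∈ (↑S : Set (Fin m)), Haff A g i := by
  ext x
  simp [flat, Haff, Set.mem_iInter]

lemma flat_mem_flats (hS : Consistent A S g) :
    flat A g S ∈ flats (Set.univ : Set (Fin n → F)) (Haff A g) :=
  ⟨⟨(↑S : Set (Fin m)), flat_eq_inter S⟩, hS⟩

lemma mem_flats_iff {W : Set (Fin n → F)} :
    W ∈ flats (Set.univ : Set (Fin n → F)) (Haff A g) ↔
      ∃ S : Finset (Fin m), Consistent A S g ∧ W = flat A g S := by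
  constructor
  · rintro ⟨⟨Sset, rfl⟩, hne⟩
    classical
    have hfin : Sset.Finite := Set.toFinite Sset
    refine ⟨hfin.toFinset, ?_, ?_⟩
    · rw [consistent_iff_nonempty, flat_eq_inter, hfin.coe_toFinset]
      exact hne
    · rw [flat_eq_inter, hfin.coe_toFinset]
  · rintro ⟨S, hS, rfl⟩
    exact flat_mem_flats hS

open Classical in
lemma whitney_core (hrows : ∀ i, A i ≠ 0) (g : Fin m → F)
    (hV : (Set.univ : Set (Fin n → F)).Nonempty)
    [instF : Fintype ↥(flats (Set.univ : Set (Fin n → F)) (Haff A g))]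
    [instD : DecidableEq ↥(flats (Set.univ : Set (Fin n → F)) (Haff A g))]
    [instLFO : LocallyFiniteOrder ↥(flats (Set.univ : Set (Fin n → F)) (Haff A g))] :
    ∑ W : ↥(flats (Set.univ : Set (Fin n → F)) (Haff A g)),
        Polynomial.C (IncidenceAlgebra.mu ℤ W
          (⟨Set.univ, self_mem_flats (Haff A g) hV⟩ :
            ↥(flats (Set.univ : Set (Fin n → F)) (Haff A g)))) *
          Polynomial.X ^ adim F (W : Set (Fin n → F))
      = ∑ S ∈ Finset.univ.filter (fun S : Finset (Fin m) => Consistent A S g),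
          Polynomial.C ((-1 : ℤ) ^ S.card) * Polynomial.X ^ adim F (flat A g S) := by
  classical
  set Vtop : ↥(flats (Set.univ : Set (Fin n → F)) (Haff A g)) :=
    ⟨Set.univ, self_mem_flats (Haff A g) hV⟩ with hVtop
  letI : OrderTop ↥(flats (Set.univ : Set (Fin n → F)) (Haff A g)) :=
    { top := Vtop
      le_top := fun U => (Set.subset_univ _ : (U : Set (Fin n → F)) ⊆ Set.univ) }
  set φ : Finset (Fin m) → ↥(flats (Set.univ : Set (Fin n → F)) (Haff A g)) :=
    fun S => if h : Consistent A S g then ⟨flat A g S, flat_mem_flats h⟩ else Vtop with hφ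
  have hφpos : ∀ {S : Finset (Fin m)} (h : Consistent A S g),
      φ S = ⟨flat A g S, flat_mem_flats h⟩ := by
    intro S h
    simp only [hφ, dif_pos h]
  have hφcoe : ∀ {S : Finset (Fin m)} (h : Consistent A S g), (φ S : Set (Fin n → F)) = flat A g S := by
    intro S h
    rw [hφpos h]
  -- description of the fibers of φ
  have hfib : ∀ W : ↥(flats (Set.univ : Set (Fin n → F)) (Haff A g)),
      Finset.univ.filter (fun S : Finset (Fin m) => flat A g S = (W : Set (Fin n → F)))
        = (Finset.univ.filter (fun S : Finset (Fin m) => Consistent A S g)).filter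
            (fun S => φ S = W) := by
    intro W
    ext S
    simp only [Finset.mem_filter, Finset.mem_univ, true_and, Finset.filter_filter]
    constructor
    · intro h
      have hcons : Consistent A S g := by
        rw [consistent_iff_nonempty, h]
        exact W.2.2
      exact ⟨hcons, by rw [hφpos hcons]; exact Subtype.ext h⟩
    · rintro ⟨hcons, hphi⟩
      rw [← hphi, hφcoe hcons]
  -- the `J`-set of a flat
  set J : ↥(flats (Set.univ : Set (Fin n → F)) (Haff A g)) → Finset (Fin m) :=
    fun W => Finset.univ.filter
      (fun i => ∀ x ∈ (W : Set (Fin n → F)), A i ⬝ᵥ x = g i) with hJ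
  have hJsub : ∀ (W : ↥(flats (Set.univ : Set (Fin n → F)) (Haff A g)))
      (S : Finset (Fin m)), (W : Set (Fin n → F)) ⊆ flat A g S ↔ S ⊆ J W := by
    intro W S
    constructor
    · intro h i hiS
      rw [hJ]
      refine Finset.mem_filter.2 ⟨Finset.mem_univ _, fun x hx => ?_⟩
      exact h hx i hiS
    · intro h x hx i hiS
      exact (Finset.mem_filter.1 (h hiS)).2 x hx
  have hJtop : ∀ W, J W = ∅ ↔ W = Vtop := by
    intro W
    constructor
    · intro hJW
      obtain ⟨⟨Sset, hW⟩, hne⟩ := W.2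
      have hSset : Sset = ∅ := by
        by_contra hSne
        obtain ⟨i, hi⟩ := Set.nonempty_iff_ne_empty.2 hSne
        have hiJ : i ∈ J W := by
          rw [hJ]
          refine Finset.mem_filter.2 ⟨Finset.mem_univ _, fun x hx => ?_⟩
          have : x ∈ Set.univ ∩ ⋂ i ∈ Sset, Haff A g i := by rw [← hW]; exact hx
          exact Set.mem_iInter₂.1 this.2 i hi
        rw [hJW] at hiJ
        exact absurd hiJ (Finset.notMem_empty i)
      apply Subtype.ext
      rw [hW, hSset]
      simp
      rfl
    · rintro rfl
      rw [Finset.eq_empty_iff_forall_notMem]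
      intro i hi
      rw [hJ, Finset.mem_filter] at hi
      have h0 := hi.2 0 (Set.mem_univ _)
      rw [dotProduct_zero] at h0
      apply hrows i
      funext j
      have hj := hi.2 (Pi.single j 1) (Set.mem_univ _)
      rw [dotProduct_single, mul_one, ← h0] at hj
      exact hj
  -- the zeta-sum of `nn` over the up-set of `W`
  have sumJ : ∀ W : ↥(flats (Set.univ : Set (Fin n → F)) (Haff A g)),
      ∑ U ∈ Finset.Ici W, nn A g ↑U = if W = Vtop then 1 else 0 := by
    intro W
    have hWne : (W : Set (Fin n → F)).Nonempty := W.2.2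
    have hstep : ∀ U ∈ Finset.Ici W,
        nn A g ↑U = ∑ S ∈ (Finset.univ.filter
          (fun S : Finset (Fin m) => (W : Set (Fin n → F)) ⊆ flat A g S)).filter
            (fun S => φ S = U), (-1 : ℤ) ^ S.card := by
      intro U hU
      have hWU' : W ≤ U := Finset.mem_Ici.1 hU
      have hWU : (W : Set (Fin n → F)) ⊆ (U : Set (Fin n → F)) := hWU' 
      rw [nn]
      apply Finset.sum_congr _ (fun _ _ => rfl)
      ext S
      simp only [Finset.mem_filter, Finset.mem_univ, true_and, Finset.filter_filter]
      constructor
      · intro h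
        have hcons : Consistent A S g := by
          rw [consistent_iff_nonempty, h]
          exact U.2.2
        exact ⟨h ▸ hWU, by rw [hφpos hcons]; exact Subtype.ext h⟩
      · rintro ⟨hsub, hphi⟩
        have hcons : Consistent A S g := by
          rw [consistent_iff_nonempty]
          exact hWne.mono hsub
        rw [← hphi, hφcoe hcons]
    have hmaps : ∀ S ∈ Finset.univ.filter
        (fun S : Finset (Fin m) => (W : Set (Fin n → F)) ⊆ flat A g S), φ S ∈ Finset.Ici W := by
      intro S hS
      rw [Finset.mem_filter] at hS
      have hcons : Consistent A S g := by
        rw [consistent_iff_nonempty]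
        exact hWne.mono hS.2
      rw [Finset.mem_Ici, hφpos hcons]
      exact hS.2
    rw [Finset.sum_congr rfl hstep,
      Finset.sum_fiberwise_of_maps_to hmaps (fun S => (-1 : ℤ) ^ S.card)]
    have hpow : Finset.univ.filter
        (fun S : Finset (Fin m) => (W : Set (Fin n → F)) ⊆ flat A g S) = (J W).powerset := by
      ext S
      simp only [Finset.mem_filter, Finset.mem_univ, true_and, Finset.mem_powerset]
      exact hJsub W S
    rw [hpow, Finset.sum_powerset_neg_one_pow_card]
    by_cases hW : W = Vtop
    · rw [if_pos ((hJtop W).2 hW), if_pos hW]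
    · rw [if_neg (fun h => hW ((hJtop W).1 h)), if_neg hW]
  -- Möbius inversion
  have key : ∀ W : ↥(flats (Set.univ : Set (Fin n → F)) (Haff A g)),
      nn A g ↑W = IncidenceAlgebra.mu ℤ W Vtop := by
    intro W
    have hinv := IncidenceAlgebra.moebius_inversion_top
      (fun U : ↥(flats (Set.univ : Set (Fin n → F)) (Haff A g)) => nn A g ↑U)
      (fun U => if U = Vtop then 1 else 0) (fun x => (sumJ x).symm) W
    rw [hinv, Finset.sum_eq_single Vtop]
    · rw [if_pos rfl, mul_one]
    · intro b _ hb
      rw [if_neg hb, mul_zero]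
    · intro habs
      refine absurd (Finset.mem_Ici.2 ?_) habs
      exact (Set.subset_univ _ : (W : Set (Fin n → F)) ⊆ Set.univ)
  -- assemble
  have hterm : ∀ W : ↥(flats (Set.univ : Set (Fin n → F)) (Haff A g)),
      Polynomial.C (IncidenceAlgebra.mu ℤ W Vtop) * Polynomial.X ^ adim F (W : Set (Fin n → F))
        = ∑ S ∈ (Finset.univ.filter (fun S : Finset (Fin m) => Consistent A S g)).filter
            (fun S => φ S = W),
            Polynomial.C ((-1 : ℤ) ^ S.card) * Polynomial.X ^ adim F (flat A g S) := by
    intro W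
    rw [← key W, nn, map_sum, Finset.sum_mul, hfib W]
    apply Finset.sum_congr rfl
    intro S hS
    rw [Finset.mem_filter, Finset.mem_filter] at hS
    have hcoe : flat A g S = (W : Set (Fin n → F)) := by
      rw [← hS.2, hφcoe hS.1.2]
    rw [hcoe]
  rw [Finset.sum_congr rfl (fun W _ => hterm W)]
  exact Finset.sum_fiberwise_of_maps_to (fun S _ => Finset.mem_univ _) _

open Classical in
lemma chi_eq_sum (hrows : ∀ i, A i ≠ 0) (g : Fin m → F) :
    chi F (Set.univ : Set (Fin n → F)) (Haff A g)
      = ∑ S ∈ Finset.univ.filter (fun S : Finset (Fin m) => Consistent A S g),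
          Polynomial.C ((-1 : ℤ) ^ S.card) * Polynomial.X ^ adim F (flat A g S) := by
  classical
  have hV : (Set.univ : Set (Fin n → F)).Nonempty := Set.univ_nonempty
  letI instF : Fintype ↥(flats (Set.univ : Set (Fin n → F)) (Haff A g)) :=
    (flats_finite Set.univ (Haff A g)).fintype
  letI instLFO : LocallyFiniteOrder ↥(flats (Set.univ : Set (Fin n → F)) (Haff A g)) :=
    Fintype.toLocallyFiniteOrder
  unfold chi
  rw [dif_pos hV]
  exact whitney_core hrows g hV


open Classical in
lemma chi_coeff (hrows : ∀ i, A i ≠ 0) (g : Fin m → F) {k : ℕ} (hk : k ≤ n) :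
    (chi F (Set.univ : Set (Fin n → F)) (Haff A g)).coeff (n - k)
      = ∑ S ∈ Finset.univ.filter (fun S : Finset (Fin m) => Consistent A S g ∧ rk A S = k),
          (-1 : ℤ) ^ S.card := by
  classical
  rw [chi_eq_sum hrows g, Polynomial.finset_sum_coeff]
  have hterm : ∀ S ∈ Finset.univ.filter (fun S : Finset (Fin m) => Consistent A S g),
      (Polynomial.C ((-1 : ℤ) ^ S.card) * Polynomial.X ^ adim F (flat A g S)).coeff (n - k)
        = if n - k = adim F (flat A g S) then (-1 : ℤ) ^ S.card else 0 := by
    intro S _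
    rw [Polynomial.coeff_C_mul, Polynomial.coeff_X_pow, mul_ite, mul_one, mul_zero]
  rw [Finset.sum_congr rfl hterm, Finset.sum_ite, Finset.sum_const_zero, add_zero,
    Finset.filter_filter]
  apply Finset.sum_congr _ (fun _ _ => rfl)
  apply Finset.filter_congr
  intro S _
  constructor
  · rintro ⟨hcons, hadim⟩
    rw [adim_flat hcons] at hadim
    have h1 : rk A S ≤ n := rk_le_n
    exact ⟨hcons, by omega⟩
  · rintro ⟨hcons, hrk⟩
    rw [adim_flat hcons, hrk]
    exact ⟨hcons, rfl⟩

end Stmt13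
/-- Writing `χ(A_g, t) = ∑ (-1)^k a_k(g) t^(n-k)`, for every `g` and
every `k` one has `a_k(0) ≤ a_k(g)`: the unsigned coefficients of the characteristic
polynomial of the central arrangement `A_0` are bounded by those of `χ(A_g, t)`. -/
theorem central_coefficients_minimal
    (hm : 0 < m) (hn : 0 < n) (A : Matrix (Fin m) (Fin n) F) (hrows : ∀ i, A i ≠ 0)
    (g : Fin m → F) :
    ∀ k ≤ n,
      (-1 : ℤ) ^ k * (chi F Set.univ (Haff A (0 : Fin m → F))).coeff (n - k) ≤
        (-1 : ℤ) ^ k * (chi F Set.univ (Haff A g)).coeff (n - k) := by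
  intro k hk
  classical
  rw [Stmt13.chi_coeff hrows g hk, Stmt13.chi_coeff hrows (0 : Fin m → F) hk,
    Stmt13.sum_sign_eq, Stmt13.sum_sign_eq]
  have hone : (-1 : ℤ) ^ k * (-1 : ℤ) ^ k = 1 := by
    rw [← mul_pow]
    norm_num
  rw [← mul_assoc, hone, ← mul_assoc, hone, one_mul, one_mul]
  exact_mod_cast Finset.card_le_card (Stmt13.fix_subset A g k)
end

section
/- Let F be a finite field with q elements. If g, h ∈ F^m satisfy I_g = I_h (equivalently, C_g = C_h), then the complements of the two arrangements have the same cardinality: #{x ∈ F^n : ρ_i·x ≠ g_i for all i ∈ [m]} = #{x ∈ F^n : ρ_i·x ≠ h_i for all i ∈ [m]}. -/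
open Matrix

variable {F : Type*} [Field F] {m n : ℕ}

section Aux
open Finset
variable {F : Type*} [Field F] [Fintype F] [DecidableEq F] {m n : ℕ}

/-- Number of solutions of subsystem J is the same for g and h when Iset's agree. -/
lemma aux_card_sub (A : Matrix (Fin m) (Fin n) F) (g h : Fin m → F)
    (hgh : ∀ J : Finset (Fin m), (∃ x : Fin n → F, ∀ j ∈ J, A j ⬝ᵥ x = g j) ↔
      (∃ x : Fin n → F, ∀ j ∈ J, A j ⬝ᵥ x = h j)) (J : Finset (Fin m)) :
    (univ.filter fun x : Fin n → F => ∀ j ∈ J, A j ⬝ᵥ x = g j).card =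
    (univ.filter fun x : Fin n → F => ∀ j ∈ J, A j ⬝ᵥ x = h j).card := by
  by_cases hc : ∃ x : Fin n → F, ∀ j ∈ J, A j ⬝ᵥ x = g j
  · obtain ⟨x0, hx0⟩ := hc
    obtain ⟨y0, hy0⟩ := (hgh J).mp ⟨x0, hx0⟩
    apply Finset.card_bij' (fun x _ => x - x0 + y0) (fun y _ => y - y0 + x0)
    · intro x hx
      simp only [mem_filter, mem_univ, true_and] at hx ⊢
      intro j hj
      simp [dotProduct_add, dotProduct_sub, hx j hj, hx0 j hj, hy0 j hj]
    · intro y hy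
      simp only [mem_filter, mem_univ, true_and] at hy ⊢
      intro j hj
      simp [dotProduct_add, dotProduct_sub, hy j hj, hx0 j hj, hy0 j hj]
    · intro x _; abel
    · intro y _; abel
  · have hc' : ¬ ∃ x : Fin n → F, ∀ j ∈ J, A j ⬝ᵥ x = h j := fun h' => hc ((hgh J).mpr h')
    rw [Finset.filter_false_of_mem, Finset.filter_false_of_mem]
    · intro x _ hx; exact hc' ⟨x, hx⟩
    · intro x _ hx; exact hc ⟨x, hx⟩

lemma aux_IE (A : Matrix (Fin m) (Fin n) F) (g : Fin m → F) :
    ((univ.filter fun x : Fin n → F => ∀ i : Fin m, A i ⬝ᵥ x ≠ g i).card : ℤ) =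
    ∑ J ∈ (univ : Finset (Fin m)).powerset, (-1 : ℤ) ^ J.card *
      (univ.filter fun x : Fin n → F => ∀ j ∈ J, A j ⬝ᵥ x = g j).card := by
  have key : ∀ x : Fin n → F,
      (if (∀ i : Fin m, A i ⬝ᵥ x ≠ g i) then (1 : ℤ) else 0) =
      ∏ i : Fin m, ((-(if A i ⬝ᵥ x = g i then (1:ℤ) else 0)) + 1) := by
    intro x
    by_cases hx : ∀ i : Fin m, A i ⬝ᵥ x ≠ g i
    · rw [if_pos hx, Finset.prod_eq_one]
      intro i _; rw [if_neg (hx i)]; ring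
    · rw [if_neg hx]
      push_neg at hx
      obtain ⟨i, hi⟩ := hx
      rw [eq_comm]
      apply Finset.prod_eq_zero (Finset.mem_univ i)
      rw [if_pos hi]; ring
  rw [Finset.card_filter]
  push_cast
  rw [Finset.sum_congr rfl fun x _ => key x]
  have expand : ∀ x : Fin n → F,
      (∏ i : Fin m, ((-(if A i ⬝ᵥ x = g i then (1:ℤ) else 0)) + 1)) =
      ∑ J ∈ (univ : Finset (Fin m)).powerset,
        (-1 : ℤ) ^ J.card * ∏ j ∈ J, (if A j ⬝ᵥ x = g j then (1:ℤ) else 0) := by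
    intro x
    rw [Finset.prod_add]
    apply Finset.sum_congr rfl
    intro J _
    rw [Finset.prod_const_one, mul_one]
    rw [Finset.prod_congr rfl (fun j _ => (neg_one_mul ((if A j ⬝ᵥ x = g j then (1:ℤ) else 0))).symm),
      Finset.prod_mul_distrib, Finset.prod_const]
  rw [Finset.sum_congr rfl fun x _ => expand x, Finset.sum_comm]
  apply Finset.sum_congr rfl
  intro J _
  rw [← Finset.mul_sum]
  congr 1
  rw [Finset.card_filter]
  push_cast
  apply Finset.sum_congr rfl
  intro x _
  by_cases hx : ∀ j ∈ J, A j ⬝ᵥ x = g j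
  · rw [if_pos hx, Finset.prod_eq_one]
    intro j hj; rw [if_pos (hx j hj)]
  · rw [if_neg hx]
    push_neg at hx
    obtain ⟨j, hj, hjx⟩ := hx
    apply Finset.prod_eq_zero hj
    rw [if_neg hjx]
end Aux

/-- Over a finite field, if `I_g = I_h` (equivalently `C_g = C_h`) then
the complements of the arrangements `A_g` and `A_h` have the same cardinality. -/
theorem complement_card_eq_of_Iset_eq {F : Type*} [Field F] [Fintype F] {m n : ℕ}
    (hm : 0 < m) (hn : 0 < n) (A : Matrix (Fin m) (Fin n) F)
    (g h : Fin m → F) (hgh : Iset A g = Iset A h) :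
    {x : Fin n → F | ∀ i : Fin m, A i ⬝ᵥ x ≠ g i}.ncard =
      {x : Fin n → F | ∀ i : Fin m, A i ⬝ᵥ x ≠ h i}.ncard := by
  classical
  have hIff : ∀ J : Finset (Fin m), (∃ x : Fin n → F, ∀ j ∈ J, A j ⬝ᵥ x = g j) ↔
      (∃ x : Fin n → F, ∀ j ∈ J, A j ⬝ᵥ x = h j) := by
    intro J
    have : J ∈ Iset A g ↔ J ∈ Iset A h := by rw [hgh]
    exact this
  have h1 := aux_IE A g
  have h2 := aux_IE A h
  have h3 : ((Finset.univ.filter fun x : Fin n → F => ∀ i : Fin m, A i ⬝ᵥ x ≠ g i).card : ℤ) =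
      ((Finset.univ.filter fun x : Fin n → F => ∀ i : Fin m, A i ⬝ᵥ x ≠ h i).card : ℤ) := by
    rw [h1, h2]
    exact Finset.sum_congr rfl fun J _ => by rw [aux_card_sub A g h hIff J]
  have h4 : (Finset.univ.filter fun x : Fin n → F => ∀ i : Fin m, A i ⬝ᵥ x ≠ g i).card =
      (Finset.univ.filter fun x : Fin n → F => ∀ i : Fin m, A i ⬝ᵥ x ≠ h i).card := by
    exact_mod_cast h3
  rw [Set.ncard_eq_toFinset_card', Set.ncard_eq_toFinset_card']
  simpa [Set.toFinset_setOf] using h4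
end
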